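/- arXiv:1401.6198 — 9 statements merged into one kernel-verified Lean document; each statement's English description precedes it below -/
import Mathlib

section
/- Let (K,𝒦) be a measurable space and Q a Markov kernel from K to K (so Q(x,·) is a probability measure on K for each x ∈ K, measurably in x). Suppose there is a constant C ≥ 1 such that Q(x,A) ≤ C·Q(y,A) for all x, y ∈ K and all A ∈ 𝒦. For a probability measure μ on K define (μQ)(A) := ∫_K Q(x,A) μ(dx). Then for any two probability measures μ and μ′ on K, ‖μQ − μ′Q‖_TV ≤ (1 − 1/C)·‖μ − μ′‖_TV. -/
open MeasureTheory ProbabilityTheory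
open scoped ENNReal

/-- Total variation norm of the difference of two measures:
`‖μ − ν‖_TV = sup_A (μ(A) − ν(A)) + sup_A (ν(A) − μ(A))`. -/
noncomputable def tvDist {K : Type*} [MeasurableSpace K] (μ ν : Measure K) : ℝ≥0∞ :=
  (⨆ (A : Set K) (_ : MeasurableSet A), (μ A - ν A)) +
  (⨆ (A : Set K) (_ : MeasurableSet A), (ν A - μ A))

/-!
For a measurable set `A` put `f x = Q(x, A)` and `m = inf f`. The Harnack bound gives
`f x / C ≤ m`, so `f - m` takes values in `[0, 1 - 1/C]`. The constant `m` cancels in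
`μQ(A) - μ'Q(A) = ∫ f dμ - ∫ f dμ'`, and integrating a function with values in `[0, c]`
against the Hahn decomposition `(s, sᶜ)` of `μ - μ'` gives at most `c (μ s - μ' s)`.
Applied to `μ - μ'` and `μ' - μ`, the two suprema of `tvDist` contract by `1 - 1/C`.
-/

namespace MeasureTheory

variable {α : Type*} [MeasurableSpace α]

lemma Measure.restrict_le_restrict_of_forall_subset {μ ν : Measure α} {s : Set α}
    (hs : MeasurableSet s) (h : ∀ t, MeasurableSet t → t ⊆ s → μ t ≤ ν t) :
    μ.restrict s ≤ ν.restrict s :=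
  Measure.le_iff.mpr fun t ht => by
    simpa only [Measure.restrict_apply ht] using
      h _ (ht.inter hs) Set.inter_subset_right

lemma lintegral_sub_lintegral_le_of_le {ν ν' : Measure α} [IsFiniteMeasure ν] (hνν' : ν ≤ ν')
    {g : α → ℝ≥0∞} {c : ℝ≥0∞} (hg : ∀ x, g x ≤ c) :
    ∫⁻ x, g x ∂ν' - ∫⁻ x, g x ∂ν ≤ c * (ν' Set.univ - ν Set.univ) := by
  have hsplit : ∫⁻ x, g x ∂ν' = ∫⁻ x, g x ∂(ν' - ν) + ∫⁻ x, g x ∂ν := by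
    rw [← lintegral_add_measure, Measure.sub_add_cancel_of_le hνν']
  calc ∫⁻ x, g x ∂ν' - ∫⁻ x, g x ∂ν ≤ ∫⁻ x, g x ∂(ν' - ν) := tsub_le_iff_right.mpr hsplit.le
    _ ≤ ∫⁻ _, c ∂(ν' - ν) := lintegral_mono hg
    _ = c * (ν' Set.univ - ν Set.univ) := by
      rw [lintegral_const, Measure.sub_apply MeasurableSet.univ hνν']

lemma lintegral_sub_lintegral_le_of_hahn {μ μ' : Measure α} [IsFiniteMeasure μ']
    {s : Set α} (hs : MeasurableSet s)
    (hpos : ∀ t, MeasurableSet t → t ⊆ s → μ' t ≤ μ t)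
    (hneg : ∀ t, MeasurableSet t → t ⊆ sᶜ → μ t ≤ μ' t)
    {g : α → ℝ≥0∞} {c : ℝ≥0∞} (hg : ∀ x, g x ≤ c) :
    ∫⁻ x, g x ∂μ - ∫⁻ x, g x ∂μ' ≤ c * (μ s - μ' s) := by
  have hcompl : ∫⁻ x in sᶜ, g x ∂μ ≤ ∫⁻ x in sᶜ, g x ∂μ' :=
    lintegral_mono' (Measure.restrict_le_restrict_of_forall_subset hs.compl hneg) le_rfl
  calc ∫⁻ x, g x ∂μ - ∫⁻ x, g x ∂μ'
      ≤ (∫⁻ x in s, g x ∂μ + ∫⁻ x in sᶜ, g x ∂μ') -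
          (∫⁻ x in s, g x ∂μ' + ∫⁻ x in sᶜ, g x ∂μ') := by
        rw [← lintegral_add_compl g hs, ← lintegral_add_compl g hs (μ := μ')]
        gcongr
    _ ≤ ∫⁻ x in s, g x ∂μ - ∫⁻ x in s, g x ∂μ' := add_tsub_add_le_tsub_right
    _ ≤ c * (μ s - μ' s) := by
        simpa only [Measure.restrict_apply_univ] using
          lintegral_sub_lintegral_le_of_le
            (Measure.restrict_le_restrict_of_forall_subset hs hpos) hg

end MeasureTheory

namespace ProbabilityTheory.Kernel

variable {α : Type*} [MeasurableSpace α]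

lemma apply_sub_iInf_apply_le {Q : Kernel α α} [IsMarkovKernel Q] {c : ℝ≥0∞}
    (hQ : ∀ x y : α, ∀ A : Set α, MeasurableSet A → Q x A ≤ c * Q y A)
    {A : Set α} (hA : MeasurableSet A) (x : α) :
    Q x A - ⨅ y, Q y A ≤ 1 - c⁻¹ := by
  have hinf : Q x A / c ≤ ⨅ y, Q y A :=
    le_iInf fun y => ENNReal.div_le_of_le_mul (by rw [mul_comm]; exact hQ x y A hA)
  calc Q x A - ⨅ y, Q y A ≤ Q x A - Q x A * c⁻¹ := tsub_le_tsub_left hinf _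
    _ = Q x A * (1 - c⁻¹) := by rw [ENNReal.mul_sub fun _ _ => measure_ne_top _ _, mul_one]
    _ ≤ 1 - c⁻¹ := mul_le_of_le_one_left' prob_le_one

lemma bind_apply_sub_bind_apply_le {Q : Kernel α α} [IsMarkovKernel Q] {c : ℝ≥0∞}
    (hosc : ∀ A, MeasurableSet A → ∀ x, Q x A - ⨅ y, Q y A ≤ c)
    {μ μ' : Measure α} [IsProbabilityMeasure μ] [IsProbabilityMeasure μ']
    {s : Set α} (hs : MeasurableSet s)
    (hpos : ∀ t, MeasurableSet t → t ⊆ s → μ' t ≤ μ t)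
    (hneg : ∀ t, MeasurableSet t → t ⊆ sᶜ → μ t ≤ μ' t)
    {A : Set α} (hA : MeasurableSet A) :
    μ.bind (fun x => Q x) A - μ'.bind (fun x => Q x) A ≤ c * (μ s - μ' s) := by
  set m := ⨅ y, Q y A
  have hbind : ∀ (ν : Measure α) [IsProbabilityMeasure ν],
      ν.bind (fun x => Q x) A = ∫⁻ x, (Q x A - m) ∂ν + m := fun ν _ => by
    rw [Measure.bind_apply hA Q.measurable.aemeasurable]
    calc ∫⁻ x, Q x A ∂ν = ∫⁻ x, (Q x A - m + m) ∂ν :=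
          lintegral_congr fun x => (tsub_add_cancel_of_le (iInf_le (fun y => Q y A) x)).symm
      _ = ∫⁻ x, (Q x A - m) ∂ν + m := by
          rw [lintegral_add_right _ measurable_const, MeasureTheory.lintegral_const, measure_univ, mul_one]
  rw [hbind μ, hbind μ']
  exact add_tsub_add_le_tsub_right.trans
    (lintegral_sub_lintegral_le_of_hahn hs hpos hneg (hosc A hA))

/-- Dobrushin's contraction estimate. -/
lemma tvDist_bind_le {Q : Kernel α α} [IsMarkovKernel Q] {c : ℝ≥0∞}
    (hosc : ∀ A, MeasurableSet A → ∀ x, Q x A - ⨅ y, Q y A ≤ c)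
    (μ μ' : Measure α) [IsProbabilityMeasure μ] [IsProbabilityMeasure μ'] :
    tvDist (μ.bind (fun x => Q x)) (μ'.bind (fun x => Q x)) ≤ c * tvDist μ μ' := by
  obtain ⟨s, hs, hpos, hneg⟩ := hahn_decomposition μ μ'
  have hpos' : ∀ t, MeasurableSet t → t ⊆ sᶜ → μ t ≤ μ' t := hneg
  have hneg' : ∀ t, MeasurableSet t → t ⊆ sᶜᶜ → μ' t ≤ μ t := by
    simpa only [compl_compl] using hpos
  calc tvDist (μ.bind (fun x => Q x)) (μ'.bind (fun x => Q x))
      ≤ c * (μ s - μ' s) + c * (μ' sᶜ - μ sᶜ) :=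
        add_le_add
          (iSup₂_le fun A hA => bind_apply_sub_bind_apply_le hosc hs hpos hneg hA)
          (iSup₂_le fun A hA => bind_apply_sub_bind_apply_le hosc hs.compl hpos' hneg' hA)
    _ ≤ c * tvDist μ μ' := by
        rw [← mul_add, tvDist]
        gcongr
        · exact le_iSup₂ (f := fun A (_ : MeasurableSet A) => μ A - μ' A) s hs
        · exact le_iSup₂ (f := fun A (_ : MeasurableSet A) => μ' A - μ A) sᶜ hs.compl

end ProbabilityTheory.Kernel

theorem stmt1 {K : Type*} [MeasurableSpace K] (Q : Kernel K K) [IsMarkovKernel Q]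
    (C : ℝ) (hC : 1 ≤ C)
    (hQ : ∀ x y : K, ∀ A : Set K, MeasurableSet A →
      Q x A ≤ ENNReal.ofReal C * Q y A)
    (μ μ' : Measure K) [IsProbabilityMeasure μ] [IsProbabilityMeasure μ'] :
    tvDist (μ.bind (fun x => Q x)) (μ'.bind (fun x => Q x)) ≤
      ENNReal.ofReal (1 - 1/C) * tvDist μ μ' := by
  have hC0 : 0 < C := zero_lt_one.trans_le hC
  have hcoef : ENNReal.ofReal (1 - 1/C) = 1 - (ENNReal.ofReal C)⁻¹ := by
    rw [ENNReal.ofReal_sub _ (by positivity), ENNReal.ofReal_one, one_div,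
      ENNReal.ofReal_inv_of_pos hC0]
  rw [hcoef]
  exact Kernel.tvDist_bind_le (fun A hA => Kernel.apply_sub_iInf_apply_le hQ hA) μ μ'
end

section
/- Let d ≥ 1, D ⊂ ℝ^d be a bounded set containing 0, d̄ := diam(D), and M ≥ 0 with |b(x)| ≤ M for all x ∈ D, where b : D → ℝ^d. Let π : ℝ^d × ℝ^d → [0,∞) be measurable with ∫_{ℝ^d}(|z|² ∧ 1)π(x,z)dz < ∞ and ∫_{|z|>1}|z| π(x,z)dz < ∞ for every x ∈ D. Suppose R > max(1, 2d̄, 2M) satisfies inf_{x∈D} ∫_{|z|≤R} |z|² π(x,z) dz ≥ 1 + 2 d̄ M + 2 d̄ · sup_{x∈D} ∫_{1<|z|≤R} |z| π(x,z) dz. Let f ∈ C²(ℝ^d) be bounded and radially nondecreasing (f(x) = h(|x|) with h nondecreasing) with f(x) = |x|² for |x| ≤ 2R and f(x) = 8R² for |x| ≥ 2R+1. Then for every x ∈ D, b(x)·∇f(x) + ∫_{ℝ^d} 𝔡f(x;z) π(x,z) dz ≥ 1. -/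
/-! For `x ∈ D` we have `‖x‖ ≤ diam D < R / 2`, so `f = ‖·‖²` near `x` and `∇f(x) = 2x`; the
drift term is therefore at least `-2 diam(D) M`. For `‖z‖ ≤ R` the point `x + z` still lies in
the ball where `f = ‖·‖²`, so `𝔡f(x;z) = ‖z‖² + 𝟙_{‖z‖>1} 2⟪x, z⟫ ≥ ‖z‖² - 𝟙_{‖z‖>1} 2 diam(D) ‖z‖`,
while for `‖z‖ > R ≥ 2‖x‖` the compensator vanishes and `‖x + z‖ ≥ ‖x‖`, so radial monotonicity
gives `𝔡f(x;z) ≥ 0`. Integrating this minorant against `π(x, ·)` and using the choice of `R`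
gives the bound `1`. -/

open MeasureTheory
open scoped ENNReal

/-- The compensated increment `𝔡f(x;z) = f(x+z) - f(x) - 𝟙_{‖z‖≤1} ∇f(x)·z`. -/
noncomputable def jumpIncrement {d : ℕ} (f : EuclideanSpace ℝ (Fin d) → ℝ)
    (x z : EuclideanSpace ℝ (Fin d)) : ℝ :=
  f (x + z) - f x - (if ‖z‖ ≤ 1 then fderiv ℝ f x z else 0)

open Set
open scoped InnerProductSpace

theorem integrable_of_lintegral_ofReal_lt_top {α : Type*} [MeasurableSpace α] {μ : Measure α}
    {f : α → ℝ} (hf : Measurable f) (hf0 : ∀ z, 0 ≤ f z)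
    (hfin : ∫⁻ z, ENNReal.ofReal (f z) ∂μ < ∞) : Integrable f μ :=
  (lintegral_ofReal_ne_top_iff_integrable hf.aestronglyMeasurable (ae_of_all _ hf0)).1 hfin.ne

section LevyIntegrability

variable {E : Type*} [NormedAddCommGroup E] [MeasurableSpace E] [OpensMeasurableSpace E]
  {μ : Measure E} {p g : E → ℝ}

theorem integrable_of_abs_le_levy (K : ℝ) (hg : AEStronglyMeasurable g μ)
    (hsmall : Integrable (fun z ↦ min (‖z‖ ^ 2) 1 * p z) μ)
    (hlarge : IntegrableOn (fun z ↦ ‖z‖ * p z) {z | 1 < ‖z‖} μ)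
    (hle : ∀ z, |g z| ≤ K * ((if ‖z‖ ≤ 1 then ‖z‖ ^ 2 else ‖z‖) * p z)) :
    Integrable g μ := by
  have hS : MeasurableSet {z : E | ‖z‖ ≤ 1} := measurableSet_le measurable_norm measurable_const
  have hL : MeasurableSet {z : E | 1 < ‖z‖} := measurableSet_lt measurable_const measurable_norm
  rw [← integrableOn_univ, show (univ : Set E) = {z | ‖z‖ ≤ 1} ∪ {z | 1 < ‖z‖} from
    (union_compl_self {z : E | ‖z‖ ≤ 1}).symm.trans (by simp [compl_ofPred]), integrableOn_union]
  constructor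
  · refine (hsmall.integrableOn.const_mul K).mono' hg.restrict
      (ae_restrict_of_forall_mem hS fun z (hz : ‖z‖ ≤ 1) ↦ ?_)
    simpa [min_eq_left (pow_le_one₀ (norm_nonneg z) hz), hz] using hle z
  · refine (hlarge.const_mul K).mono' hg.restrict
      (ae_restrict_of_forall_mem hL fun z (hz : 1 < ‖z‖) ↦ ?_)
    simpa [hz.not_ge] using hle z

theorem integrable_indicator_norm_sq_mul (hp : Measurable p) (hp0 : ∀ z, 0 ≤ p z)
    (hsmall : Integrable (fun z ↦ min (‖z‖ ^ 2) 1 * p z) μ)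
    (hlarge : IntegrableOn (fun z ↦ ‖z‖ * p z) {z | 1 < ‖z‖} μ) {R : ℝ} :
    Integrable ({z | ‖z‖ ≤ R}.indicator fun z ↦ ‖z‖ ^ 2 * p z) μ := by
  have hS : MeasurableSet {z : E | ‖z‖ ≤ R} := measurableSet_le measurable_norm measurable_const
  refine integrable_of_abs_le_levy (max 1 R)
    (((measurable_norm.pow_const 2).mul hp).indicator hS).aestronglyMeasurable
    hsmall hlarge fun z ↦ ?_
  have hK1 : 1 ≤ max 1 R := le_max_left 1 R
  have hKR : R ≤ max 1 R := le_max_right 1 R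
  have hpz := hp0 z
  simp only [indicator_apply, mem_ofPred_eq]
  split_ifs with hzR hz1 hz1
  · rw [abs_of_nonneg (by positivity)]
    nlinarith [mul_nonneg (sq_nonneg ‖z‖) hpz]
  · rw [abs_of_nonneg (by positivity)]
    nlinarith [mul_nonneg (norm_nonneg z) hpz, mul_nonneg (mul_nonneg (norm_nonneg z) hpz) (norm_nonneg z)]
  all_goals rw [abs_zero]; positivity

end LevyIntegrability

section NormSq

variable {F : Type*} [NormedAddCommGroup F] [InnerProductSpace ℝ F]
  {f : F → ℝ} {r : ℝ} {x : F}

theorem fderiv_apply_of_eq_norm_sq (hf : ∀ y, ‖y‖ ≤ r → f y = ‖y‖ ^ 2) (hx : ‖x‖ < r) (v : F) :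
    fderiv ℝ f x v = 2 * ⟪x, v⟫_ℝ := by
  have hloc : f =ᶠ[nhds x] fun y ↦ ‖y‖ ^ 2 := by
    filter_upwards [Metric.isOpen_ball.mem_nhds (mem_ball_zero_iff.2 hx)] with y hy
    exact hf y (mem_ball_zero_iff.1 hy).le
  simp [hloc.fderiv_eq, fderiv_norm_sq_apply]

theorem abs_real_inner_le_of_norm_le {v : F} {a b : ℝ} (hx : ‖x‖ ≤ a) (hv : ‖v‖ ≤ b) :
    |⟪x, v⟫_ℝ| ≤ a * b :=
  (abs_real_inner_le_norm x v).trans (mul_le_mul hx hv (norm_nonneg v) ((norm_nonneg x).trans hx))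

end NormSq

section JumpIncrement

variable {d : ℕ} {f : EuclideanSpace ℝ (Fin d) → ℝ} {x z : EuclideanSpace ℝ (Fin d)}
  {h : ℝ → ℝ} {C r R a : ℝ}

theorem jumpIncrement_eq_of_eq_norm_sq (hf : ∀ y, ‖y‖ ≤ r → f y = ‖y‖ ^ 2) (hx : ‖x‖ < r)
    (hxz : ‖x + z‖ ≤ r) :
    jumpIncrement f x z = ‖z‖ ^ 2 + if ‖z‖ ≤ 1 then 0 else 2 * ⟪x, z⟫_ℝ := by
  rw [jumpIncrement, hf _ hxz, hf x hx.le, norm_add_sq_real, fderiv_apply_of_eq_norm_sq hf hx]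
  split_ifs <;> ring

theorem jumpIncrement_nonneg_of_monotone (hh : Monotone h) (hfh : ∀ y, f y = h ‖y‖)
    (hz : 1 < ‖z‖) (hxz : 2 * ‖x‖ ≤ ‖z‖) : 0 ≤ jumpIncrement f x z := by
  have hx : ‖x‖ ≤ ‖x + z‖ := by
    have := norm_sub_le (x + z) x
    rw [add_sub_cancel_left] at this
    linarith
  rw [jumpIncrement, if_neg hz.not_ge, sub_zero, sub_nonneg, hfh, hfh]
  exact hh hx

theorem abs_jumpIncrement_le_of_abs_le (hC : ∀ y, |f y| ≤ C) (hz : 1 < ‖z‖) :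
    |jumpIncrement f x z| ≤ 2 * C := by
  rw [jumpIncrement, if_neg hz.not_ge, sub_zero, two_mul]
  exact (abs_sub _ _).trans (add_le_add (hC _) (hC _))

theorem indicator_sub_indicator_le_jumpIncrement (hh : Monotone h) (hfh : ∀ y, f y = h ‖y‖)
    (hf : ∀ y, ‖y‖ ≤ r → f y = ‖y‖ ^ 2) (hxa : ‖x‖ ≤ a) (hR : 1 ≤ R) (haR : 2 * a ≤ R)
    (hr : a + R ≤ r) :
    {z | ‖z‖ ≤ R}.indicator (fun z ↦ ‖z‖ ^ 2) z -
        {z | 1 < ‖z‖ ∧ ‖z‖ ≤ R}.indicator (fun z ↦ 2 * a * ‖z‖) z ≤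
      jumpIncrement f x z := by
  simp only [indicator_apply, mem_ofPred_eq]
  rcases le_or_gt ‖z‖ R with hzR | hzR
  · rw [jumpIncrement_eq_of_eq_norm_sq hf (by linarith) ((norm_add_le x z).trans (by linarith))]
    by_cases hz1 : ‖z‖ ≤ 1
    · simp [hzR, hz1, hz1.not_gt]
    · have hinner := abs_le.1 (abs_real_inner_le_of_norm_le hxa (le_refl ‖z‖))
      rw [if_pos hzR, if_pos ⟨not_le.1 hz1, hzR⟩, if_neg hz1]
      linarith
  · rw [if_neg hzR.not_ge, if_neg fun h ↦ h.2.not_gt hzR, sub_zero]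
    exact jumpIncrement_nonneg_of_monotone hh hfh (by linarith) (by linarith)

theorem abs_jumpIncrement_le_levy (hC : ∀ y, |f y| ≤ C) (hf : ∀ y, ‖y‖ ≤ r → f y = ‖y‖ ^ 2)
    (hxa : ‖x‖ ≤ a) (hR : 1 ≤ R) (hr : a + R ≤ r) :
    |jumpIncrement f x z| ≤ (R + 2 * a + 2 * C) * (if ‖z‖ ≤ 1 then ‖z‖ ^ 2 else ‖z‖) := by
  have ha : 0 ≤ a := (norm_nonneg x).trans hxa
  have hC0 : 0 ≤ C := (abs_nonneg _).trans (hC 0)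
  rcases le_or_gt ‖z‖ R with hzR | hzR
  · have hxz : ‖x + z‖ ≤ r := (norm_add_le x z).trans (by linarith)
    rw [jumpIncrement_eq_of_eq_norm_sq hf (by linarith) hxz]
    split_ifs with hz1
    · rw [add_zero, abs_of_nonneg (sq_nonneg _)]
      nlinarith [sq_nonneg ‖z‖]
    · have hinner := abs_real_inner_le_of_norm_le hxa (le_refl ‖z‖)
      calc |‖z‖ ^ 2 + 2 * ⟪x, z⟫_ℝ| ≤ ‖z‖ ^ 2 + 2 * (a * ‖z‖) := by
            rw [abs_le]; constructor <;> nlinarith [abs_le.1 hinner, sq_nonneg ‖z‖]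
        _ ≤ (R + 2 * a + 2 * C) * ‖z‖ := by nlinarith [norm_nonneg z]
  · have hz1 : 1 < ‖z‖ := by linarith
    rw [if_neg hz1.not_ge]
    calc |jumpIncrement f x z| ≤ 2 * C := abs_jumpIncrement_le_of_abs_le hC hz1
      _ ≤ (R + 2 * a + 2 * C) * ‖z‖ := by nlinarith

theorem measurable_jumpIncrement (hf : Measurable f) : Measurable (jumpIncrement f x) :=
  ((hf.comp (measurable_const_add x)).sub measurable_const).sub <|
    Measurable.ite (measurableSet_le measurable_norm measurable_const)
      (fderiv ℝ f x).continuous.measurable measurable_const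

theorem integrable_jumpIncrement_mul {μ : Measure (EuclideanSpace ℝ (Fin d))}
    {p : EuclideanSpace ℝ (Fin d) → ℝ} (hp : Measurable p) (hp0 : ∀ z, 0 ≤ p z)
    (hsmall : Integrable (fun z ↦ min (‖z‖ ^ 2) 1 * p z) μ)
    (hlarge : IntegrableOn (fun z ↦ ‖z‖ * p z) {z | 1 < ‖z‖} μ) (hfm : Measurable f)
    (hC : ∀ y, |f y| ≤ C) (hf : ∀ y, ‖y‖ ≤ r → f y = ‖y‖ ^ 2) (hxa : ‖x‖ ≤ a) (hR : 1 ≤ R)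
    (hr : a + R ≤ r) :
    Integrable (fun z ↦ jumpIncrement f x z * p z) μ := by
  refine integrable_of_abs_le_levy (R + 2 * a + 2 * C)
    ((measurable_jumpIncrement hfm).mul hp).aestronglyMeasurable hsmall hlarge fun z ↦ ?_
  rw [abs_mul, abs_of_nonneg (hp0 z), ← mul_assoc]
  exact mul_le_mul_of_nonneg_right (abs_jumpIncrement_le_levy hC hf hxa hR hr) (hp0 z)

theorem integral_jumpIncrement_mul_ge {μ : Measure (EuclideanSpace ℝ (Fin d))}
    {p : EuclideanSpace ℝ (Fin d) → ℝ} (hp : Measurable p) (hp0 : ∀ z, 0 ≤ p z)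
    (hsmall : Integrable (fun z ↦ min (‖z‖ ^ 2) 1 * p z) μ)
    (hlarge : IntegrableOn (fun z ↦ ‖z‖ * p z) {z | 1 < ‖z‖} μ)
    (hh : Monotone h) (hfh : ∀ y, f y = h ‖y‖) (hC : ∀ y, |f y| ≤ C)
    (hf : ∀ y, ‖y‖ ≤ r → f y = ‖y‖ ^ 2) (hxa : ‖x‖ ≤ a) (hR : 1 ≤ R) (haR : 2 * a ≤ R)
    (hr : a + R ≤ r) :
    ∫ z in {z | ‖z‖ ≤ R}, ‖z‖ ^ 2 * p z ∂μ -
        2 * a * ∫ z in {z | 1 < ‖z‖ ∧ ‖z‖ ≤ R}, ‖z‖ * p z ∂μ ≤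
      ∫ z, jumpIncrement f x z * p z ∂μ := by
  set S := {z : EuclideanSpace ℝ (Fin d) | ‖z‖ ≤ R}
  set A := {z : EuclideanSpace ℝ (Fin d) | 1 < ‖z‖ ∧ ‖z‖ ≤ R}
  have hS : MeasurableSet S := measurableSet_le measurable_norm measurable_const
  have hA : MeasurableSet A :=
    (measurableSet_lt measurable_const measurable_norm).inter hS
  have hfm : Measurable f := by
    rw [show f = h ∘ norm from funext hfh]
    exact hh.measurable.comp measurable_norm
  have hjump := integrable_jumpIncrement_mul hp hp0 hsmall hlarge hfm hC hf hxa hR hr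
  have hsq := integrable_indicator_norm_sq_mul hp hp0 hsmall hlarge (R := R)
  have hlin : Integrable (A.indicator fun z ↦ 2 * a * (‖z‖ * p z)) μ :=
    IntegrableOn.integrable_indicator
      (Integrable.const_mul (hlarge.mono_set fun _ hz ↦ hz.1) (2 * a)) hA
  calc ∫ z in S, ‖z‖ ^ 2 * p z ∂μ - 2 * a * ∫ z in A, ‖z‖ * p z ∂μ
      = ∫ z, (S.indicator (fun z ↦ ‖z‖ ^ 2 * p z) z -
          A.indicator (fun z ↦ 2 * a * (‖z‖ * p z)) z) ∂μ := by
        rw [integral_sub hsq hlin, integral_indicator hS, integral_indicator hA,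
          integral_const_mul]
    _ ≤ ∫ z, jumpIncrement f x z * p z ∂μ := by
        refine integral_mono (hsq.sub hlin) hjump fun z ↦ ?_
        have hfactor : S.indicator (fun z ↦ ‖z‖ ^ 2 * p z) z -
            A.indicator (fun z ↦ 2 * a * (‖z‖ * p z)) z =
            (S.indicator (fun z ↦ ‖z‖ ^ 2) z - A.indicator (fun z ↦ 2 * a * ‖z‖) z) * p z := by
          simp only [indicator_apply]
          split_ifs <;> ring
        rw [hfactor]
        exact mul_le_mul_of_nonneg_right
          (indicator_sub_indicator_le_jumpIncrement hh hfh hf hxa hR haR hr) (hp0 z)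

end JumpIncrement

theorem stmt6_general (d : ℕ)
    (D : Set (EuclideanSpace ℝ (Fin d))) (hDbdd : Bornology.IsBounded D)
    (hD0 : (0 : EuclideanSpace ℝ (Fin d)) ∈ D)
    (b : EuclideanSpace ℝ (Fin d) → EuclideanSpace ℝ (Fin d))
    (M : ℝ) (hbM : ∀ x ∈ D, ‖b x‖ ≤ M)
    (π : EuclideanSpace ℝ (Fin d) → EuclideanSpace ℝ (Fin d) → ℝ)
    (hπmeas : Measurable (Function.uncurry π)) (hπnn : ∀ x z, 0 ≤ π x z)
    (hπint : ∀ x ∈ D,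
      (∫⁻ z, ENNReal.ofReal (min (‖z‖ ^ 2) 1 * π x z)) < ⊤)
    (hπint2 : ∀ x ∈ D,
      (∫⁻ z in {z : EuclideanSpace ℝ (Fin d) | 1 < ‖z‖},
        ENNReal.ofReal (‖z‖ * π x z)) < ⊤)
    (R : ℝ) (hR : max 1 (max (2 * Metric.diam D) (2 * M)) < R)
    (hRbig : ∀ x ∈ D, ∀ y ∈ D,
      1 + 2 * Metric.diam D * M +
          2 * Metric.diam D *
            ∫ z in {z : EuclideanSpace ℝ (Fin d) | 1 < ‖z‖ ∧ ‖z‖ ≤ R}, ‖z‖ * π y z ≤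
        ∫ z in {z : EuclideanSpace ℝ (Fin d) | ‖z‖ ≤ R}, ‖z‖ ^ 2 * π x z)
    (f : EuclideanSpace ℝ (Fin d) → ℝ)
    (hfbdd : ∃ Cf : ℝ, ∀ x, |f x| ≤ Cf)
    (hfrad : ∃ h : ℝ → ℝ, Monotone h ∧ ∀ x, f x = h ‖x‖)
    (hfeq : ∀ x : EuclideanSpace ℝ (Fin d), ‖x‖ ≤ 2 * R → f x = ‖x‖ ^ 2) :
    ∀ x ∈ D, 1 ≤ fderiv ℝ f x (b x) + ∫ z, jumpIncrement f x z * π x z := by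
  obtain ⟨C, hC⟩ := hfbdd
  obtain ⟨h, hh, hfh⟩ := hfrad
  intro x hx
  have hR1 : 1 < R := (le_max_left _ _).trans_lt hR
  have hRD : 2 * Metric.diam D < R := ((le_max_left _ _).trans (le_max_right _ _)).trans_lt hR
  have hxD : ‖x‖ ≤ Metric.diam D := by
    simpa using Metric.dist_le_diam_of_mem hDbdd hx hD0
  have hπx : Measurable (π x) := hπmeas.of_uncurry_left
  have hdrift : -(2 * Metric.diam D * M) ≤ fderiv ℝ f x (b x) := by
    have hinner := abs_real_inner_le_of_norm_le hxD (hbM x hx)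
    rw [fderiv_apply_of_eq_norm_sq hfeq (by linarith)]
    linarith [neg_abs_le ⟪x, b x⟫_ℝ]
  have hjump := integral_jumpIncrement_mul_ge hπx (hπnn x)
    (integrable_of_lintegral_ofReal_lt_top
      (((measurable_norm.pow_const 2).min measurable_const).mul hπx)
      (fun z ↦ mul_nonneg (le_min (sq_nonneg _) zero_le_one) (hπnn x z)) (hπint x hx))
    (integrable_of_lintegral_ofReal_lt_top (measurable_norm.mul hπx)
      (fun z ↦ mul_nonneg (norm_nonneg _) (hπnn x z)) (hπint2 x hx))
    hh hfh hC hfeq hxD hR1.le hRD.le (by linarith)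
  linarith [hRbig x hx x hx]

theorem stmt6 (d : ℕ) (hd : 1 ≤ d)
    (D : Set (EuclideanSpace ℝ (Fin d))) (hDbdd : Bornology.IsBounded D)
    (hD0 : (0 : EuclideanSpace ℝ (Fin d)) ∈ D)
    (b : EuclideanSpace ℝ (Fin d) → EuclideanSpace ℝ (Fin d))
    (M : ℝ) (hM : 0 ≤ M) (hbM : ∀ x ∈ D, ‖b x‖ ≤ M)
    (π : EuclideanSpace ℝ (Fin d) → EuclideanSpace ℝ (Fin d) → ℝ)
    (hπmeas : Measurable (Function.uncurry π)) (hπnn : ∀ x z, 0 ≤ π x z)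
    (hπint : ∀ x ∈ D,
      (∫⁻ z, ENNReal.ofReal (min (‖z‖ ^ 2) 1 * π x z)) < ⊤)
    (hπint2 : ∀ x ∈ D,
      (∫⁻ z in {z : EuclideanSpace ℝ (Fin d) | 1 < ‖z‖},
        ENNReal.ofReal (‖z‖ * π x z)) < ⊤)
    (R : ℝ) (hR : max 1 (max (2 * Metric.diam D) (2 * M)) < R)
    (hRbig : ∀ x ∈ D, ∀ y ∈ D,
      1 + 2 * Metric.diam D * M +
          2 * Metric.diam D *
            ∫ z in {z : EuclideanSpace ℝ (Fin d) | 1 < ‖z‖ ∧ ‖z‖ ≤ R}, ‖z‖ * π y z ≤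
        ∫ z in {z : EuclideanSpace ℝ (Fin d) | ‖z‖ ≤ R}, ‖z‖ ^ 2 * π x z)
    (f : EuclideanSpace ℝ (Fin d) → ℝ) (hf : ContDiff ℝ 2 f)
    (hfbdd : ∃ Cf : ℝ, ∀ x, |f x| ≤ Cf)
    (hfrad : ∃ h : ℝ → ℝ, Monotone h ∧ ∀ x, f x = h ‖x‖)
    (hfeq : ∀ x : EuclideanSpace ℝ (Fin d), ‖x‖ ≤ 2 * R → f x = ‖x‖ ^ 2)
    (hfout : ∀ x : EuclideanSpace ℝ (Fin d), 2 * R + 1 ≤ ‖x‖ → f x = 8 * R ^ 2) :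
    ∀ x ∈ D, 1 ≤ fderiv ℝ f x (b x) + ∫ z, jumpIncrement f x z * π x z :=
  stmt6_general d D hDbdd hD0 b M hbM π hπmeas hπnn hπint hπint2 R hR hRbig f hfbdd hfrad hfeq
end

section
/- Let s ∈ (1/2, 1) and q ∈ (s − 1/2, s). Then the function z ↦ (z^q − z^{2s−1−q}) log z / (1−z)^{1+2s} is Lebesgue integrable on (0,1) and ∫₀¹ (z^q − z^{2s−1−q}) (log z) / (1−z)^{1+2s} dz > 0. -/
open MeasureTheory

theorem stmt10 (s q : ℝ) (hs1 : 1/2 < s) (hs2 : s < 1)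
    (hq1 : s - 1/2 < q) (hq2 : q < s) :
    IntegrableOn
      (fun z : ℝ => (z ^ q - z ^ (2*s - 1 - q)) * Real.log z / (1 - z) ^ (1 + 2*s))
      (Set.Ioo 0 1) ∧
    0 < ∫ z in Set.Ioo (0:ℝ) 1,
      (z ^ q - z ^ (2*s - 1 - q)) * Real.log z / (1 - z) ^ (1 + 2*s) := by
  set b : ℝ := 2*s - 1 - q with hb_def
  set f : ℝ → ℝ := fun z : ℝ => (z ^ q - z ^ (2*s - 1 - q)) * Real.log z / (1 - z) ^ (1 + 2*s)
    with hf_def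
  have hb1 : -(1/2 : ℝ) < b := by simp only [hb_def]; linarith
  have hb2 : b < q := by simp only [hb_def]; linarith
  -- continuity on Ioo 0 1
  have hcont : ContinuousOn f (Set.Ioo (0:ℝ) 1) := by
    apply ContinuousOn.div
    · refine ContinuousOn.mul ?_ (Real.continuousOn_log.mono ?_)
      · exact (continuousOn_id.rpow_const fun x hx => Or.inl (ne_of_gt hx.1)).sub
          (continuousOn_id.rpow_const fun x hx => Or.inl (ne_of_gt hx.1))
      · intro x hx; exact ne_of_gt hx.1
    · exact (continuousOn_const.sub continuousOn_id).rpow_const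
        fun x hx => Or.inl (by simp; linarith [hx.2])
    · intro x hx
      exact ne_of_gt (Real.rpow_pos_of_pos (by linarith [hx.2]) _)
  -- the key pointwise bounds for -log
  have hlog_bound : ∀ z : ℝ, 0 < z → z < 1 → -Real.log z ≤ z⁻¹ - 1 := by
    intro z hz hz1
    have := Real.log_le_sub_one_of_pos (x := z⁻¹) (by positivity)
    rwa [Real.log_inv] at this
  -- integrability on (0, 1/2]
  have h1 : IntegrableOn f (Set.Ioc (0:ℝ) (1/2)) := by
    set ε : ℝ := (b + 1)/2 with hε_def
    have hε : 0 < ε := by simp only [hε_def]; linarith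
    have hr : (-1 : ℝ) < (b - 1)/2 := by linarith
    have hg : IntegrableOn (fun z : ℝ => (8/ε) * z ^ ((b-1)/2)) (Set.Ioc (0:ℝ) (1/2)) :=
      ((intervalIntegral.intervalIntegrable_rpow' hr (a := 0) (b := 1/2)).1).const_mul _
    refine Integrable.mono hg ((hcont.mono ?_).aestronglyMeasurable measurableSet_Ioc) ?_
    · intro x hx; exact ⟨hx.1, lt_of_le_of_lt hx.2 (by norm_num)⟩
    rw [ae_restrict_iff' measurableSet_Ioc]
    filter_upwards with z hz
    obtain ⟨hz0, hz12⟩ := hz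
    have hz1 : z < 1 := lt_of_le_of_lt hz12 (by norm_num)
    have hlogle : -Real.log z ≤ z ^ (-ε) / ε := by
      have h1 : Real.log (z ^ (-ε)) ≤ z ^ (-ε) - 1 :=
        Real.log_le_sub_one_of_pos (Real.rpow_pos_of_pos hz0 _)
      rw [Real.log_rpow hz0] at h1
      have : -ε * Real.log z ≤ z ^ (-ε) := by linarith [Real.rpow_pos_of_pos hz0 (-ε)]
      calc -Real.log z = (-ε * Real.log z)/ε := by field_simp
        _ ≤ z ^ (-ε) / ε := by gcongr
    have hnum : |z ^ q - z ^ (2*s - 1 - q)| ≤ z ^ b := by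
      rw [abs_sub_comm, abs_of_nonneg (by
        have : z ^ q ≤ z ^ b := Real.rpow_le_rpow_of_exponent_ge hz0 hz1.le hb2.le
        linarith)]
      have : 0 ≤ z ^ q := (Real.rpow_pos_of_pos hz0 q).le
      linarith
    have hlogabs : |Real.log z| = -Real.log z := by
      rw [abs_of_nonpos (Real.log_nonpos hz0.le hz1.le)]
    have hden : (1/8 : ℝ) ≤ (1 - z) ^ (1 + 2*s) := by
      have h12 : (1/2 : ℝ) ≤ 1 - z := by linarith
      have h3 : (1 + 2*s : ℝ) ≤ 3 := by linarith
      calc (1/8 : ℝ) = (1/2 : ℝ) ^ (3:ℝ) := by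
            rw [show (3:ℝ) = ((3:ℕ):ℝ) by norm_num, Real.rpow_natCast]; norm_num
        _ ≤ (1/2 : ℝ) ^ (1 + 2*s) :=
            Real.rpow_le_rpow_of_exponent_ge (by norm_num) (by norm_num) h3
        _ ≤ (1 - z) ^ (1 + 2*s) := Real.rpow_le_rpow (by norm_num) h12 (by linarith)
    have hdenpos : (0:ℝ) < (1 - z) ^ (1 + 2*s) := lt_of_lt_of_le (by norm_num) hden
    rw [Real.norm_eq_abs, Real.norm_eq_abs, hf_def,
      abs_of_nonneg (mul_nonneg (div_nonneg (by norm_num) hε.le) (Real.rpow_nonneg hz0.le _)),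
      abs_div, abs_mul, hlogabs, abs_of_pos hdenpos]
    have key : |z ^ q - z ^ (2*s - 1 - q)| * -Real.log z / (1 - z) ^ (1 + 2*s)
        ≤ z ^ b * (z ^ (-ε) / ε) / (1/8) := by
      apply div_le_div₀ (by positivity) ?_ (by norm_num) hden
      exact mul_le_mul hnum hlogle (by linarith [Real.log_nonpos hz0.le hz1.le])
        (Real.rpow_pos_of_pos hz0 b).le
    refine key.trans ?_
    rw [show z ^ b * (z ^ (-ε) / ε) / (1/8) = (8/ε) * (z ^ b * z ^ (-ε)) from by ring,
      ← Real.rpow_add hz0, show b + -ε = (b-1)/2 from by simp only [hε_def]; ring]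
  -- integrability on (1/2, 1)
  have h2 : IntegrableOn f (Set.Ioo (1/2 : ℝ) 1) := by
    set c : ℝ := q - b with hc_def
    have hc : 0 < c := by simp only [hc_def]; linarith
    have hg0 : IntervalIntegrable (fun x : ℝ => x ^ (1 - 2*s)) volume 0 (1/2) :=
      intervalIntegral.intervalIntegrable_rpow' (by linarith)
    have hg1 : IntervalIntegrable (fun x : ℝ => (1 - x) ^ (1 - 2*s)) volume (1 - 1/2) (1 - 0) :=
      (hg0.comp_sub_left 1).symm
    norm_num at hg1
    have hg : IntegrableOn (fun z : ℝ => (8*c) * (1 - z) ^ (1 - 2*s)) (Set.Ioo (1/2:ℝ) 1) :=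
      (hg1.1.mono_set Set.Ioo_subset_Ioc_self).const_mul _
    refine Integrable.mono hg ((hcont.mono ?_).aestronglyMeasurable measurableSet_Ioo) ?_
    · intro x hx; exact ⟨lt_trans (by norm_num) hx.1, hx.2⟩
    rw [ae_restrict_iff' measurableSet_Ioo]
    filter_upwards with z hz
    obtain ⟨hz12, hz1⟩ := hz
    have hz0 : (0:ℝ) < z := lt_trans (by norm_num) hz12
    have hlog2 : -Real.log z ≤ 2 * (1 - z) := by
      have := hlog_bound z hz0 hz1
      have hinv : z * z⁻¹ = 1 := mul_inv_cancel₀ (ne_of_gt hz0)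
      have h2z : z⁻¹ - 1 ≤ 2 * (1 - z) := by
        nlinarith [hinv, mul_nonneg (by linarith : (0:ℝ) ≤ 2*z-1) (by linarith : (0:ℝ) ≤ 1-z)]
      linarith
    have hzb : z ^ b ≤ 2 := by
      have h1 : z ^ b ≤ z ^ (-(1/2):ℝ) :=
        Real.rpow_le_rpow_of_exponent_ge hz0 hz1.le hb1.le
      have h2 : z ^ (-(1/2):ℝ) ≤ (1/2 : ℝ) ^ (-(1/2):ℝ) :=
        Real.rpow_le_rpow_of_nonpos (by norm_num) hz12.le (by norm_num)
      have h3 : (1/2 : ℝ) ^ (-(1/2):ℝ) = (2:ℝ) ^ ((1/2):ℝ) := by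
        rw [one_div, Real.inv_rpow (by norm_num), ← Real.rpow_neg (by norm_num)]
        norm_num
      have h4 : (2:ℝ) ^ ((1/2):ℝ) ≤ (2:ℝ) ^ (1:ℝ) :=
        Real.rpow_le_rpow_of_exponent_le (by norm_num) (by norm_num)
      rw [Real.rpow_one] at h4
      linarith [h3 ▸ h2]
    have hcz : 1 - z ^ c ≤ c * (2 * (1 - z)) := by
      have h1 : 1 + c * Real.log z ≤ z ^ c := by
        rw [Real.rpow_def_of_pos hz0]
        linarith [Real.add_one_le_exp (Real.log z * c)]
      nlinarith [mul_le_mul_of_nonneg_left hlog2 hc.le]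
    have hnum : |z ^ q - z ^ (2*s - 1 - q)| ≤ 2 * (c * (2 * (1 - z))) := by
      rw [abs_sub_comm, abs_of_nonneg (by
        have : z ^ q ≤ z ^ b := Real.rpow_le_rpow_of_exponent_ge hz0 hz1.le hb2.le
        linarith)]
      have hsplit : z ^ (2*s - 1 - q) - z ^ q = z ^ b * (1 - z ^ c) := by
        rw [mul_sub, mul_one, ← Real.rpow_add hz0]
        simp only [hc_def, hb_def]
        ring_nf
      rw [hsplit]
      have h1z : 0 ≤ 1 - z ^ c := by
        have : z ^ c ≤ 1 := Real.rpow_le_one hz0.le hz1.le hc.le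
        linarith
      calc z ^ b * (1 - z ^ c) ≤ 2 * (1 - z ^ c) :=
            mul_le_mul_of_nonneg_right hzb h1z
        _ ≤ 2 * (c * (2 * (1 - z))) := by linarith
    have hlogabs : |Real.log z| = -Real.log z := by
      rw [abs_of_nonpos (Real.log_nonpos hz0.le hz1.le)]
    have hdenpos : (0:ℝ) < (1 - z) ^ (1 + 2*s) := Real.rpow_pos_of_pos (by linarith) _
    have hz1' : (0:ℝ) < 1 - z := by linarith
    rw [Real.norm_eq_abs, Real.norm_eq_abs, hf_def,
      abs_of_nonneg (mul_nonneg (by linarith : (0:ℝ) ≤ 8*c) (Real.rpow_nonneg hz1'.le _)),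
      abs_div, abs_mul, hlogabs, abs_of_pos hdenpos]
    have key : |z ^ q - z ^ (2*s - 1 - q)| * -Real.log z / (1 - z) ^ (1 + 2*s)
        ≤ (2 * (c * (2 * (1 - z)))) * (2 * (1 - z)) / (1 - z) ^ (1 + 2*s) := by
      have hRHS : (0:ℝ) ≤ (2 * (c * (2 * (1 - z)))) * (2 * (1 - z)) := by nlinarith [mul_nonneg (mul_nonneg hc.le hz1'.le) hz1'.le]
      apply div_le_div₀ hRHS ?_ hdenpos le_rfl
      exact mul_le_mul hnum hlog2 (by linarith [Real.log_nonpos hz0.le hz1.le]) (by nlinarith [mul_nonneg hc.le hz1'.le])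
    refine key.trans ?_
    have heq : (2 * (c * (2 * (1 - z)))) * (2 * (1 - z)) / (1 - z) ^ (1 + 2*s)
        = (8*c) * ((1-z) ^ (2:ℝ) / (1-z) ^ (1 + 2*s)) := by
      rw [show ((1:ℝ)-z) ^ (2:ℝ) = (1-z)^(2:ℕ) by rw [← Real.rpow_natCast]; norm_num]
      ring
    rw [heq, ← Real.rpow_sub hz1', show (2 : ℝ) - (1 + 2*s) = 1 - 2*s from by ring]
  -- combine integrability
  have hInt : IntegrableOn f (Set.Ioo (0:ℝ) 1) := by
    apply (h1.union h2).mono_set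
    intro x hx
    by_cases h : x ≤ 1/2
    · exact Or.inl ⟨hx.1, h⟩
    · exact Or.inr ⟨lt_of_not_ge h, hx.2⟩
  refine ⟨hInt, ?_⟩
  -- positivity
  have hfpos : ∀ z ∈ Set.Ioo (0:ℝ) 1, 0 < f z := by
    intro z hz
    obtain ⟨hz0, hz1⟩ := hz
    have h1 : z ^ q < z ^ (2*s - 1 - q) :=
      Real.rpow_lt_rpow_of_exponent_gt hz0 hz1 hb2
    have h2 : Real.log z < 0 := Real.log_neg hz0 hz1
    have h3 : (0:ℝ) < (1 - z) ^ (1 + 2*s) := Real.rpow_pos_of_pos (by linarith) _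
    have : 0 < (z ^ q - z ^ (2*s - 1 - q)) * Real.log z := mul_pos_of_neg_of_neg (by linarith) h2
    exact div_pos this h3
  have hii : IntervalIntegrable f volume 0 1 := by
    rw [intervalIntegrable_iff_integrableOn_Ioo_of_le (by norm_num)]
    exact hInt
  have := intervalIntegral.intervalIntegral_pos_of_pos_on hii hfpos (by norm_num)
  rwa [intervalIntegral.integral_of_le (by norm_num), integral_Ioc_eq_integral_Ioo] at this
end

section
/- Let s ∈ (1/2, 1). For q ∈ (s − 1/2, s] define B(q) := ∫₀¹ (z^q − 1)(1 − z^{2s−1−q})/(1−z)^{1+2s} dz. Then for each such q the integrand is Lebesgue integrable on (0,1), B(q) is finite, and B is strictly increasing on (s − 1/2, s]: B(q₁) < B(q₂) whenever s − 1/2 < q₁ < q₂ ≤ s. -/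
/-!
Write `a = 2s - 1`. Near `0` the integrand is `O(z^(a-q))` and near `1` its numerator is
`O((1-z)^2)`, so it is dominated by Beta-type integrands `z^α (1-z)^β` with `α, β > -1`.
Monotonicity holds already pointwise: for `q₁ < q₂` with `q₁ + q₂ > a`,
`(z^q₂ - 1)(1 - z^(a-q₂)) - (z^q₁ - 1)(1 - z^(a-q₁)) = (1 - z^(q₂-q₁))(z^(a-q₂) - z^q₁)`,
a product of two positive factors on `(0, 1)`.
-/

open MeasureTheory Set

theorem intervalIntegrable_rpow_mul_one_sub_rpow_zero_half {a : ℝ} (b : ℝ) (ha : -1 < a) :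
    IntervalIntegrable (fun z : ℝ => z ^ a * (1 - z) ^ b) volume 0 (1 / 2) := by
  refine (intervalIntegral.intervalIntegrable_rpow' ha).mul_continuousOn ?_
  refine (continuousOn_const.sub continuousOn_id).rpow_const fun z hz => Or.inl ?_
  rw [uIcc_of_le (by norm_num)] at hz
  simp only [Pi.sub_apply, id]
  linarith [hz.2]

theorem intervalIntegrable_rpow_mul_one_sub_rpow {a b : ℝ} (ha : -1 < a) (hb : -1 < b) :
    IntervalIntegrable (fun z : ℝ => z ^ a * (1 - z) ^ b) volume 0 1 := by
  have hright : IntervalIntegrable (fun z : ℝ => z ^ a * (1 - z) ^ b) volume (1 / 2) 1 := by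
    have := (intervalIntegrable_rpow_mul_one_sub_rpow_zero_half a hb).comp_sub_left 1
    norm_num at this
    simpa only [mul_comm] using this.symm
  exact (intervalIntegrable_rpow_mul_one_sub_rpow_zero_half b ha).trans hright

theorem abs_one_sub_rpow_le {z e : ℝ} (hz0 : 0 < z) (hz1 : z ≤ 1) (he0 : -1 ≤ e) (he1 : e ≤ 1) :
    |1 - z ^ e| ≤ (1 + z ^ e) * (1 - z) := by
  rcases le_or_gt 0 e with he | he
  · have hle : z ≤ z ^ e := by
      simpa only [Real.rpow_one] using Real.rpow_le_rpow_of_exponent_ge hz0 hz1 he1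
    have hle1 : z ^ e ≤ 1 := Real.rpow_le_one hz0.le hz1 he
    rw [abs_of_nonneg (by linarith)]
    nlinarith
  · have hge1 : 1 ≤ z ^ e := Real.one_le_rpow_of_pos_of_le_one_of_nonpos hz0 hz1 he.le
    have hle : z ≤ z ^ (-e) := by
      simpa only [Real.rpow_one] using
        Real.rpow_le_rpow_of_exponent_ge hz0 hz1 (by linarith : -e ≤ 1)
    have hinv : z ^ e * z ^ (-e) = 1 := by rw [← Real.rpow_add hz0]; simp
    rw [abs_of_nonpos (by linarith)]
    nlinarith

theorem abs_rpow_sub_one_mul_one_sub_rpow_div_le {q e c z : ℝ} (hq0 : 0 ≤ q) (hq1 : q ≤ 1)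
    (he0 : -1 ≤ e) (he1 : e ≤ 1) (hz0 : 0 < z) (hz1 : z < 1) :
    |(z ^ q - 1) * (1 - z ^ e) / (1 - z) ^ c| ≤ (1 + z ^ e) * (1 - z) ^ (2 - c) := by
  have hq : |z ^ q - 1| ≤ 1 - z := by
    have hle : z ≤ z ^ q := by
      simpa only [Real.rpow_one] using Real.rpow_le_rpow_of_exponent_ge hz0 hz1.le hq1
    rw [abs_of_nonpos (by linarith [Real.rpow_le_one hz0.le hz1.le hq0])]
    linarith
  have hpow : (1 - z) ^ (2 - c) = (1 - z) ^ 2 / (1 - z) ^ c := by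
    rw [Real.rpow_sub (by linarith), Real.rpow_two]
  rw [hpow, abs_div, abs_of_pos (Real.rpow_pos_of_pos (by linarith) c), ← mul_div_assoc,
    abs_mul]
  refine div_le_div_of_nonneg_right ?_ (by positivity)
  calc |z ^ q - 1| * |1 - z ^ e| ≤ (1 - z) * ((1 + z ^ e) * (1 - z)) :=
        mul_le_mul hq (abs_one_sub_rpow_le hz0 hz1.le he0 he1) (abs_nonneg _) (by linarith)
    _ = (1 + z ^ e) * (1 - z) ^ 2 := by ring

theorem integrableOn_rpow_sub_one_mul_one_sub_rpow_div {q e c : ℝ} (hq0 : 0 ≤ q) (hq1 : q ≤ 1)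
    (he0 : -1 < e) (he1 : e ≤ 1) (hc : c < 3) :
    IntegrableOn (fun z : ℝ => (z ^ q - 1) * (1 - z ^ e) / (1 - z) ^ c) (Ioo 0 1) := by
  have hdom : IntegrableOn
      (fun z : ℝ => z ^ (0 : ℝ) * (1 - z) ^ (2 - c) + z ^ e * (1 - z) ^ (2 - c)) (Ioc 0 1) :=
    ((intervalIntegrable_rpow_mul_one_sub_rpow (by norm_num) (by linarith)).add
      (intervalIntegrable_rpow_mul_one_sub_rpow he0 (by linarith))).1
  refine (hdom.mono_set Ioo_subset_Ioc_self).mono' (by fun_prop : Measurable _).aestronglyMeasurable ?_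
  refine (ae_restrict_iff' measurableSet_Ioo).2 (ae_of_all _ fun z hz => ?_)
  rw [Real.norm_eq_abs, Real.rpow_zero, ← add_mul]
  exact abs_rpow_sub_one_mul_one_sub_rpow_div_le hq0 hq1 he0.le he1 hz.1 hz.2

theorem rpow_sub_one_mul_one_sub_rpow_lt {z a q₁ q₂ : ℝ} (hz0 : 0 < z) (hz1 : z < 1)
    (hq : q₁ < q₂) (ha : a < q₁ + q₂) :
    (z ^ q₁ - 1) * (1 - z ^ (a - q₁)) < (z ^ q₂ - 1) * (1 - z ^ (a - q₂)) := by
  have h₁ : z ^ q₂ = z ^ (q₂ - q₁) * z ^ q₁ := by rw [← Real.rpow_add hz0]; ring_nf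
  have h₂ : z ^ (a - q₁) = z ^ (q₂ - q₁) * z ^ (a - q₂) := by rw [← Real.rpow_add hz0]; ring_nf
  have hpos : 0 < (1 - z ^ (q₂ - q₁)) * (z ^ (a - q₂) - z ^ q₁) := mul_pos
    (sub_pos.2 (Real.rpow_lt_one hz0.le hz1 (sub_pos.2 hq)))
    (sub_pos.2 (Real.rpow_lt_rpow_of_exponent_gt hz0 hz1 (by linarith)))
  rw [h₁, h₂]
  linarith

theorem setIntegral_lt_setIntegral_of_forall_lt {X : Type*} [MeasurableSpace X] {μ : Measure X}
    {s : Set X} {f g : X → ℝ} (hs : MeasurableSet s) (hμs : μ s ≠ 0) (hf : IntegrableOn f s μ)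
    (hg : IntegrableOn g s μ) (hlt : ∀ x ∈ s, f x < g x) :
    ∫ x in s, f x ∂μ < ∫ x in s, g x ∂μ := by
  rw [← sub_pos, ← integral_sub hg hf, setIntegral_pos_iff_support_of_nonneg_ae (f := fun x => g x - f x) _ (hg.sub hf)]
  · have hsupp : s ⊆ Function.support (fun x => g x - f x) ∩ s := fun x hx => ⟨(sub_pos.2 (hlt x hx)).ne', hx⟩
    exact (pos_iff_ne_zero.2 hμs).trans_le (measure_mono hsupp)
  · exact (ae_restrict_iff' hs).2 (ae_of_all _ fun x hx => (sub_pos.2 (hlt x hx)).le)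

theorem stmt11 (s : ℝ) (hs1 : 1/2 < s) (hs2 : s < 1) :
    (∀ q : ℝ, s - 1/2 < q → q ≤ s →
      IntegrableOn
        (fun z : ℝ => (z ^ q - 1) * (1 - z ^ (2*s - 1 - q)) / (1 - z) ^ (1 + 2*s))
        (Set.Ioo 0 1)) ∧
    ∀ q₁ q₂ : ℝ, s - 1/2 < q₁ → q₁ < q₂ → q₂ ≤ s →
      (∫ z in Set.Ioo (0:ℝ) 1,
        (z ^ q₁ - 1) * (1 - z ^ (2*s - 1 - q₁)) / (1 - z) ^ (1 + 2*s)) <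
      ∫ z in Set.Ioo (0:ℝ) 1,
        (z ^ q₂ - 1) * (1 - z ^ (2*s - 1 - q₂)) / (1 - z) ^ (1 + 2*s) := by
  have hint : ∀ q : ℝ, s - 1/2 < q → q ≤ s → IntegrableOn
      (fun z : ℝ => (z ^ q - 1) * (1 - z ^ (2*s - 1 - q)) / (1 - z) ^ (1 + 2*s)) (Ioo 0 1) :=
    fun q hq₁ hq₂ => integrableOn_rpow_sub_one_mul_one_sub_rpow_div
      (by linarith) (by linarith) (by linarith) (by linarith) (by linarith)
  refine ⟨hint, fun q₁ q₂ hq₁ hq₁₂ hq₂ => ?_⟩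
  refine setIntegral_lt_setIntegral_of_forall_lt measurableSet_Ioo (by simp)
    (hint q₁ hq₁ (by linarith)) (hint q₂ (by linarith) hq₂) fun z hz => ?_
  exact div_lt_div_of_pos_right
    (rpow_sub_one_mul_one_sub_rpow_lt hz.1 hz.2 hq₁₂ (by linarith))
    (Real.rpow_pos_of_pos (by linarith [hz.2]) _)
end

section
/- Let d ≥ 1, γ ∈ (1,2), δ ∈ (γ−1, 1), L ≥ 0, and let A ⊆ ℝ^d be open and convex. Suppose f : A → ℝ is differentiable with |∇f(u) − ∇f(v)| ≤ L|u−v|^{γ−1} for all u, v ∈ A. Then for all x, y, z ∈ ℝ^d with x ≠ y, z ≠ 0, and x, y, x+z, y+z ∈ A, |f(x+z) − f(x) − f(y+z) + f(y)| ≤ 2L |z|^{γ−δ} |x−y|^δ. -/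
/-!
The second difference `f (x + z + w) - f (x + z) - f (x + w) + f x` is the increment of
`u ↦ f (u + z) - f u` along the segment from `x` to `x + w`, so the mean value inequality and the
Hölder bound on `fderiv ℝ f` give `L ‖z‖ ^ α ‖w‖`; since the second difference is symmetric in `z`
and `w`, it is also at most `L ‖w‖ ^ α ‖z‖`. For `α ≤ δ ≤ 1` the smaller of these two products is
at most `L ‖z‖ ^ (α + 1 - δ) ‖w‖ ^ δ`.
-/

theorem Real.min_rpow_mul_le_rpow_mul_rpow {a b α δ : ℝ} (ha : 0 ≤ a) (hb : 0 ≤ b)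
    (hαδ : α ≤ δ) (hδ : δ ≤ 1) :
    min (a ^ α * b) (b ^ α * a) ≤ a ^ (α + 1 - δ) * b ^ δ := by
  rcases ha.eq_or_lt with rfl | ha
  · exact (min_le_right _ _).trans (by rw [mul_zero]; positivity)
  rcases hb.eq_or_lt with rfl | hb
  · exact (min_le_left _ _).trans (by rw [mul_zero]; positivity)
  rcases le_total a b with hab | hba
  · calc min (a ^ α * b) (b ^ α * a) ≤ b ^ α * a := min_le_right _ _
      _ = a ^ (α + 1 - δ) * (a ^ (δ - α) * b ^ α) := by
        rw [← mul_assoc, ← Real.rpow_add ha, show α + 1 - δ + (δ - α) = 1 by ring,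
          Real.rpow_one, mul_comm]
      _ ≤ a ^ (α + 1 - δ) * (b ^ (δ - α) * b ^ α) := by
        gcongr
      _ = a ^ (α + 1 - δ) * b ^ δ := by rw [← Real.rpow_add hb, sub_add_cancel]
  · calc min (a ^ α * b) (b ^ α * a) ≤ a ^ α * b := min_le_left _ _
      _ = a ^ α * b ^ (1 - δ) * b ^ δ := by
        rw [mul_assoc, ← Real.rpow_add hb, sub_add_cancel, Real.rpow_one]
      _ ≤ a ^ α * a ^ (1 - δ) * b ^ δ := by
        gcongr
      _ = a ^ (α + 1 - δ) * b ^ δ := by rw [← Real.rpow_add ha, add_sub_assoc]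

variable {E F : Type*} [NormedAddCommGroup E] [NormedSpace ℝ E]
  [NormedAddCommGroup F] [NormedSpace ℝ F] {A : Set E} {f : E → F}

theorem Convex.norm_second_diff_le_of_norm_fderiv_shift_sub_le (hA : Convex ℝ A)
    (hf : ∀ u ∈ A, DifferentiableAt ℝ f u) {C : ℝ} {x z w : E}
    (hx : x ∈ A) (hxz : x + z ∈ A) (hxw : x + w ∈ A) (hxzw : x + z + w ∈ A)
    (hC : ∀ u ∈ A, u + z ∈ A → ‖fderiv ℝ f (u + z) - fderiv ℝ f u‖ ≤ C) :
    ‖f (x + z + w) - f (x + z) - f (x + w) + f x‖ ≤ C * ‖w‖ := by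
  have hseg : segment ℝ x (x + w) ⊆ A := hA.segment_subset hx hxw
  have hseg_shift : ∀ u ∈ segment ℝ x (x + w), u + z ∈ A := by
    intro u hu
    have hu' : z + u ∈ segment ℝ (z + x) (z + (x + w)) := (mem_segment_translate ℝ z).mpr hu
    rw [add_comm z, add_comm z, add_comm z, ← add_right_comm] at hu'
    exact hA.segment_subset hxz hxzw hu'
  have hderiv : ∀ u ∈ segment ℝ x (x + w), HasFDerivWithinAt (fun u ↦ f (u + z) - f u)
      (fderiv ℝ f (u + z) - fderiv ℝ f u) (segment ℝ x (x + w)) u := fun u hu ↦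
    (((hasFDerivAt_comp_add_right z).mpr (hf _ (hseg_shift u hu)).hasFDerivAt).sub
      (hf u (hseg hu)).hasFDerivAt).hasFDerivWithinAt
  have := (convex_segment x (x + w)).norm_image_sub_le_of_norm_hasFDerivWithin_le hderiv
    (fun u hu ↦ hC u (hseg hu) (hseg_shift u hu)) (left_mem_segment ℝ x (x + w))
    (right_mem_segment ℝ x (x + w))
  convert this using 2
  · rw [add_right_comm]; abel
  · simp

theorem Convex.norm_second_diff_le_of_holder_fderiv (hA : Convex ℝ A)
    (hf : ∀ u ∈ A, DifferentiableAt ℝ f u) {L α δ : ℝ} (hL : 0 ≤ L)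
    (hholder : ∀ u ∈ A, ∀ v ∈ A, ‖fderiv ℝ f u - fderiv ℝ f v‖ ≤ L * ‖u - v‖ ^ α)
    (hαδ : α ≤ δ) (hδ : δ ≤ 1) {x z w : E}
    (hx : x ∈ A) (hxz : x + z ∈ A) (hxw : x + w ∈ A) (hxzw : x + z + w ∈ A) :
    ‖f (x + z + w) - f (x + z) - f (x + w) + f x‖ ≤ L * ‖z‖ ^ (α + 1 - δ) * ‖w‖ ^ δ := by
  have along_z := hA.norm_second_diff_le_of_norm_fderiv_shift_sub_le hf hx hxz hxw hxzw
    (C := L * ‖z‖ ^ α) fun u hu huz ↦ by simpa using hholder _ huz u hu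
  have along_w := hA.norm_second_diff_le_of_norm_fderiv_shift_sub_le hf hx hxw hxz
    (by rwa [add_right_comm]) (C := L * ‖w‖ ^ α) fun u hu huw ↦ by
      simpa using hholder _ huw u hu
  rw [add_right_comm x w z, sub_right_comm] at along_w
  calc ‖f (x + z + w) - f (x + z) - f (x + w) + f x‖
      ≤ L * min (‖z‖ ^ α * ‖w‖) (‖w‖ ^ α * ‖z‖) := by
        rw [mul_min_of_nonneg _ _ hL, ← mul_assoc, ← mul_assoc]; exact le_min along_z along_w
    _ ≤ L * ‖z‖ ^ (α + 1 - δ) * ‖w‖ ^ δ := by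
        rw [mul_assoc]; gcongr
        exact Real.min_rpow_mul_le_rpow_mul_rpow (norm_nonneg z) (norm_nonneg w) hαδ hδ

theorem stmt15_general (d : ℕ) (γ δ L : ℝ)
    (hδ1 : γ - 1 < δ) (hδ2 : δ < 1) (hL : 0 ≤ L)
    (A : Set (EuclideanSpace ℝ (Fin d))) (hAconv : Convex ℝ A)
    (f : EuclideanSpace ℝ (Fin d) → ℝ)
    (hfdiff : ∀ u ∈ A, DifferentiableAt ℝ f u)
    (hf : ∀ u ∈ A, ∀ v ∈ A, ‖fderiv ℝ f u - fderiv ℝ f v‖ ≤ L * ‖u - v‖ ^ (γ - 1)) :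
    ∀ x y z : EuclideanSpace ℝ (Fin d), x ≠ y → z ≠ 0 →
      x ∈ A → y ∈ A → x + z ∈ A → y + z ∈ A →
      |f (x + z) - f x - f (y + z) + f y| ≤
        2 * L * ‖z‖ ^ (γ - δ) * ‖x - y‖ ^ δ := by
  intro x y z _ _ hx hy hxz hyz
  have hΔ := hAconv.norm_second_diff_le_of_holder_fderiv hfdiff hL hf hδ1.le hδ2.le
    (w := y - x) hx hxz (by rwa [add_sub_cancel]) (by rwa [add_right_comm, add_sub_cancel])
  rw [add_right_comm, add_sub_cancel, Real.norm_eq_abs, norm_sub_rev,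
    show γ - 1 + 1 - δ = γ - δ by ring] at hΔ
  calc |f (x + z) - f x - f (y + z) + f y| = |f (y + z) - f (x + z) - f y + f x| := by
        rw [← abs_neg]; congr 1; ring
    _ ≤ L * ‖z‖ ^ (γ - δ) * ‖x - y‖ ^ δ := hΔ
    _ ≤ 2 * L * ‖z‖ ^ (γ - δ) * ‖x - y‖ ^ δ := by gcongr; linarith

theorem stmt15 (d : ℕ) (hd : 1 ≤ d) (γ δ L : ℝ) (hγ1 : 1 < γ) (hγ2 : γ < 2)
    (hδ1 : γ - 1 < δ) (hδ2 : δ < 1) (hL : 0 ≤ L)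
    (A : Set (EuclideanSpace ℝ (Fin d))) (hAopen : IsOpen A) (hAconv : Convex ℝ A)
    (f : EuclideanSpace ℝ (Fin d) → ℝ)
    (hfdiff : ∀ u ∈ A, DifferentiableAt ℝ f u)
    (hf : ∀ u ∈ A, ∀ v ∈ A, ‖fderiv ℝ f u - fderiv ℝ f v‖ ≤ L * ‖u - v‖ ^ (γ - 1)) :
    ∀ x y z : EuclideanSpace ℝ (Fin d), x ≠ y → z ≠ 0 →
      x ∈ A → y ∈ A → x + z ∈ A → y + z ∈ A →
      |f (x + z) - f x - f (y + z) + f y| ≤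
        2 * L * ‖z‖ ^ (γ - δ) * ‖x - y‖ ^ δ :=
  stmt15_general d γ δ L hδ1 hδ2 hL A hAconv f hfdiff hf
end

section
/- Let d ≥ 1, α′ ∈ (1,2) and η > 0. Then there exists a constant m₁ > 0, depending only on d, η and α′, such that for every x ∈ ℝ^d with |x| > 2, ∫_{{z : |x+z| ≤ |x|/4, |z| > 1}} ( |x+z|^η − |x|^η ) / |z|^{d+α′} dz ≤ −m₁ |x|^{η−α′}. -/
/-!
On the region, `z` lies in the closed ball of radius `‖x‖ / 4` about `-x`, so
`3‖x‖/4 ≤ ‖z‖ ≤ 5‖x‖/4` and the constraint `1 < ‖z‖` is automatic once `‖x‖ > 2`. There the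
integrand is at most `((‖x‖/4)^η - ‖x‖^η) / (5‖x‖/4)^(d+α') = -c ‖x‖^(η-d-α')` with `c > 0`,
and the ball has volume proportional to `‖x‖^d`.
-/

open MeasureTheory Metric

theorem Real.rpow_sub_rpow_div_rpow_le {a ρ r t R η s : ℝ} (ha : 0 ≤ a) (haρ : a ≤ ρ) (hρr : ρ ≤ r)
    (ht : 0 < t) (htR : t ≤ R) (hη : 0 ≤ η) (hs : 0 ≤ s) :
    (a ^ η - r ^ η) / t ^ s ≤ (ρ ^ η - r ^ η) / R ^ s := by
  have hρ : ρ ^ η - r ^ η ≤ 0 :=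
    sub_nonpos.2 (Real.rpow_le_rpow (ha.trans haρ) hρr hη)
  calc (a ^ η - r ^ η) / t ^ s ≤ (ρ ^ η - r ^ η) / t ^ s := by gcongr
    _ ≤ (ρ ^ η - r ^ η) / R ^ s := by
        simpa only [neg_div, neg_le_neg_iff] using div_le_div_of_nonneg_left (neg_nonneg.2 hρ)
          (Real.rpow_pos_of_pos ht s) (Real.rpow_le_rpow ht.le htR hs)

section NormedGroup

variable {E : Type*} [NormedAddCommGroup E]

theorem mem_closedBall_neg_iff {x z : E} {ρ : ℝ} : z ∈ closedBall (-x) ρ ↔ ‖x + z‖ ≤ ρ := by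
  rw [mem_closedBall_iff_norm, sub_neg_eq_add, add_comm]

theorem norm_sub_le_norm_of_mem_closedBall_neg {x z : E} {ρ : ℝ} (h : z ∈ closedBall (-x) ρ) :
    ‖x‖ - ρ ≤ ‖z‖ := by
  have := norm_le_of_mem_closedBall (mem_closedBall_comm.1 h)
  rw [norm_neg] at this
  linarith

theorem setOf_norm_add_le_and_one_lt_norm_eq_closedBall {x : E} {ρ : ℝ} (h : 1 < ‖x‖ - ρ) :
    {z : E | ‖x + z‖ ≤ ρ ∧ 1 < ‖z‖} = closedBall (-x) ρ := by
  ext z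
  rw [Set.mem_ofPred_eq, ← mem_closedBall_neg_iff, and_iff_left_iff_imp]
  intro hz
  exact h.trans_le (norm_sub_le_norm_of_mem_closedBall_neg hz)

theorem rpow_norm_add_sub_div_rpow_norm_le_of_mem_closedBall_neg {x z : E} {ρ η s : ℝ}
    (hz : z ∈ closedBall (-x) ρ) (hρ : ρ < ‖x‖) (hη : 0 ≤ η) (hs : 0 ≤ s) :
    (‖x + z‖ ^ η - ‖x‖ ^ η) / ‖z‖ ^ s ≤ (ρ ^ η - ‖x‖ ^ η) / (‖x‖ + ρ) ^ s := by
  have hlo := norm_sub_le_norm_of_mem_closedBall_neg hz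
  have hhi := norm_le_of_mem_closedBall hz
  rw [norm_neg] at hhi
  exact Real.rpow_sub_rpow_div_rpow_le (norm_nonneg _) (mem_closedBall_neg_iff.1 hz) hρ.le
    (by linarith) hhi hη hs

end NormedGroup

theorem MeasureTheory.setIntegral_le_of_le_const_real {X : Type*} [MeasurableSpace X]
    {μ : Measure X} {s : Set X} {f : X → ℝ} {c : ℝ} (hs : MeasurableSet s) (hμs : μ s ≠ ⊤)
    (hf : ∀ x ∈ s, f x ≤ c) (hfint : IntegrableOn f s μ) :
    ∫ x in s, f x ∂μ ≤ c * μ.real s := by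
  calc ∫ x in s, f x ∂μ ≤ ∫ _ in s, c ∂μ := setIntegral_mono_on hfint (integrableOn_const hμs) hs hf
    _ = c * μ.real s := by rw [setIntegral_const, smul_eq_mul, mul_comm]

theorem continuousOn_rpow_norm_add_sub_div_rpow_norm {E : Type*} [SeminormedAddCommGroup E]
    (x : E) {η : ℝ} (hη : 0 ≤ η) (s : ℝ) {S : Set E} (hS : ∀ z ∈ S, ‖z‖ ≠ 0) :
    ContinuousOn (fun z => (‖x + z‖ ^ η - ‖x‖ ^ η) / ‖z‖ ^ s) S := by
  refine ContinuousOn.div ?_ (continuousOn_id.norm.rpow_const fun z hz => .inl (hS z hz)) ?_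
  · exact ((continuous_const.add continuous_id).norm.rpow_const fun _ => .inr hη).sub
      continuous_const |>.continuousOn
  · exact fun z hz => (Real.rpow_pos_of_pos ((norm_nonneg z).lt_of_ne' (hS z hz)) s).ne'

theorem stmt16_general (d : ℕ) (α' η : ℝ) (hα1 : 1 < α')
    (hη : 0 < η) :
    ∃ m₁ > (0:ℝ), ∀ x : EuclideanSpace ℝ (Fin d), 2 < ‖x‖ →
      ∫ z in {z : EuclideanSpace ℝ (Fin d) | ‖x + z‖ ≤ ‖x‖ / 4 ∧ 1 < ‖z‖},
        (‖x + z‖ ^ η - ‖x‖ ^ η) / ‖z‖ ^ ((d : ℝ) + α')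
      ≤ -m₁ * ‖x‖ ^ (η - α') := by
  set V := volume.real (closedBall (0 : EuclideanSpace ℝ (Fin d)) 1)
  have hV : 0 < V :=
    ENNReal.toReal_pos (measure_closedBall_pos _ _ one_pos).ne' measure_closedBall_lt_top.ne
  have hs : 0 ≤ (d : ℝ) + α' := add_nonneg d.cast_nonneg (by linarith)
  have hη4 : 0 < 1 - (4 : ℝ)⁻¹ ^ η := sub_pos.2 (Real.rpow_lt_one (by norm_num) (by norm_num) hη)
  refine ⟨(1 - 4⁻¹ ^ η) * 4⁻¹ ^ d * V / (5 / 4) ^ ((d : ℝ) + α'), by positivity, fun x hx => ?_⟩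
  set r := ‖x‖
  have hr : 0 < r := by linarith
  rw [setOf_norm_add_le_and_one_lt_norm_eq_closedBall (by linarith : 1 < r - r / 4)]
  have hint : IntegrableOn (fun z => (‖x + z‖ ^ η - r ^ η) / ‖z‖ ^ ((d : ℝ) + α'))
      (closedBall (-x) (r / 4)) :=
    (continuousOn_rpow_norm_add_sub_div_rpow_norm x hη.le _ fun z hz => by
      linarith [norm_sub_le_norm_of_mem_closedBall_neg hz]).integrableOn_compact
      (isCompact_closedBall _ _)
  calc _ ≤ ((r / 4) ^ η - r ^ η) / (r + r / 4) ^ ((d : ℝ) + α') *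
        volume.real (closedBall (-x) (r / 4)) :=
      setIntegral_le_of_le_const_real measurableSet_closedBall measure_closedBall_lt_top.ne
        (fun z hz => rpow_norm_add_sub_div_rpow_norm_le_of_mem_closedBall_neg hz (by linarith)
          hη.le hs) hint
    _ = _ := by
      rw [Measure.addHaar_real_closedBall' _ _ (by positivity), finrank_euclideanSpace_fin,
        show r + r / 4 = 5 / 4 * r by ring, Real.mul_rpow (by norm_num) hr.le,
        div_eq_mul_inv r, Real.mul_rpow hr.le (by norm_num), mul_pow,
        Real.rpow_add hr, Real.rpow_sub hr, Real.rpow_natCast]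
      field_simp
      ring

theorem stmt16 (d : ℕ) (hd : 1 ≤ d) (α' η : ℝ) (hα1 : 1 < α') (hα2 : α' < 2)
    (hη : 0 < η) :
    ∃ m₁ > (0:ℝ), ∀ x : EuclideanSpace ℝ (Fin d), 2 < ‖x‖ →
      ∫ z in {z : EuclideanSpace ℝ (Fin d) | ‖x + z‖ ≤ ‖x‖ / 4 ∧ 1 < ‖z‖},
        (‖x + z‖ ^ η - ‖x‖ ^ η) / ‖z‖ ^ ((d : ℝ) + α')
      ≤ -m₁ * ‖x‖ ^ (η - α') :=
  stmt16_general d α' η hα1 hη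
end

section
/- Let d ≥ 1, β′ ∈ (1,2) and η > 0. Then there exists a constant m₂ > 0, depending only on d, η and β′, such that for every x ∈ ℝ^d with |x| > 2, ∫_{{z : |x+z| ≤ 3|x|/4, |z| > 1}} ( |x+z|^η − |x|^η ) / |z|^{d+β′} dz ≥ −m₂ |x|^{η−β′}. -/
open MeasureTheory
open scoped Pointwise

/-- Integrability of a negative power of the norm outside a ball of radius `c > 0`. -/
lemma aux_integrableOn (d : ℕ) {r c : ℝ} (hr : (d : ℝ) < r) (hc : 0 < c) :
    IntegrableOn (fun z : EuclideanSpace ℝ (Fin d) => ‖z‖ ^ (-r))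
      {z : EuclideanSpace ℝ (Fin d) | c ≤ ‖z‖} := by
  have hbase : Integrable (fun z : EuclideanSpace ℝ (Fin d) => (1 + ‖z‖) ^ (-r)) := by
    apply integrable_one_add_norm
    simpa using hr
  have hmeas : MeasurableSet {z : EuclideanSpace ℝ (Fin d) | c ≤ ‖z‖} :=
    measurableSet_le measurable_const measurable_norm
  refine Integrable.mono' (g := fun z => (c / (1 + c)) ^ (-r) * (1 + ‖z‖) ^ (-r))
    (hbase.const_mul _).integrableOn ?_ ?_
  · apply AEStronglyMeasurable.congr
      (f := fun z : EuclideanSpace ℝ (Fin d) => Real.exp (Real.log ‖z‖ * (-r)))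
    · exact ((Real.measurable_log.comp measurable_norm).mul_const _).exp.aestronglyMeasurable
    · filter_upwards [ae_restrict_mem hmeas] with z hz
      rw [Real.rpow_def_of_pos (lt_of_lt_of_le hc hz)]
  · filter_upwards [ae_restrict_mem hmeas] with z hz
    have hz' : c ≤ ‖z‖ := hz
    have hzpos : 0 < ‖z‖ := lt_of_lt_of_le hc hz'
    have hkey : c / (1 + c) * (1 + ‖z‖) ≤ ‖z‖ := by
      rw [div_mul_eq_mul_div, div_le_iff₀ (by linarith)]
      nlinarith
    have h1 : ‖z‖ ^ (-r) ≤ (c / (1 + c) * (1 + ‖z‖)) ^ (-r) :=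
      Real.rpow_le_rpow_of_nonpos (by positivity) hkey
        (by have : 0 < r := lt_of_le_of_lt (Nat.cast_nonneg d) hr; linarith)
    rw [Real.norm_eq_abs, abs_of_nonneg (Real.rpow_nonneg hzpos.le _)]
    calc ‖z‖ ^ (-r) ≤ (c / (1 + c) * (1 + ‖z‖)) ^ (-r) := h1
      _ = (c / (1 + c)) ^ (-r) * (1 + ‖z‖) ^ (-r) :=
        Real.mul_rpow (by positivity) (by positivity)

/-- Scaling identity for the integral of a negative power of the norm outside a ball. -/
lemma aux_scaling (d : ℕ) (r : ℝ) {R : ℝ} (hR : 0 < R) :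
    ∫ z in {z : EuclideanSpace ℝ (Fin d) | R ≤ ‖z‖}, ‖z‖ ^ (-r)
      = R ^ ((d : ℝ) - r) *
        ∫ z in {z : EuclideanSpace ℝ (Fin d) | 1 ≤ ‖z‖}, ‖z‖ ^ (-r) := by
  have hsmul : R • {z : EuclideanSpace ℝ (Fin d) | 1 ≤ ‖z‖}
      = {z : EuclideanSpace ℝ (Fin d) | R ≤ ‖z‖} := by
    ext z
    rw [Set.mem_smul_set_iff_inv_smul_mem₀ hR.ne']
    simp only [Set.mem_setOf_eq, norm_smul, norm_inv, Real.norm_eq_abs, abs_of_pos hR]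
    rw [le_inv_mul_iff₀ hR, mul_one]
  have h := MeasureTheory.Measure.setIntegral_comp_smul_of_pos (volume)
    (fun z : EuclideanSpace ℝ (Fin d) => ‖z‖ ^ (-r))
    {z : EuclideanSpace ℝ (Fin d) | 1 ≤ ‖z‖} hR
  rw [hsmul] at h
  have hlhs : (∫ z in {z : EuclideanSpace ℝ (Fin d) | 1 ≤ ‖z‖}, ‖R • z‖ ^ (-r))
      = R ^ (-r) * ∫ z in {z : EuclideanSpace ℝ (Fin d) | 1 ≤ ‖z‖}, ‖z‖ ^ (-r) := by
    rw [← integral_const_mul]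
    congr 1
    ext z
    rw [norm_smul, Real.norm_eq_abs, abs_of_pos hR,
      Real.mul_rpow hR.le (norm_nonneg _)]
  rw [hlhs] at h
  have hfr : Module.finrank ℝ (EuclideanSpace ℝ (Fin d)) = d := finrank_euclideanSpace_fin
  rw [hfr, smul_eq_mul] at h
  have h2 : ∫ z in {z : EuclideanSpace ℝ (Fin d) | R ≤ ‖z‖}, ‖z‖ ^ (-r)
      = R ^ d * (R ^ (-r) * ∫ z in {z : EuclideanSpace ℝ (Fin d) | 1 ≤ ‖z‖}, ‖z‖ ^ (-r)) := by
    rw [h, ← mul_assoc, mul_inv_cancel₀ (by positivity), one_mul]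
  rw [h2, ← mul_assoc, ← Real.rpow_natCast R d, ← Real.rpow_add hR]
  ring_nf

theorem stmt17 (d : ℕ) (hd : 1 ≤ d) (β' η : ℝ) (hβ1 : 1 < β') (hβ2 : β' < 2)
    (hη : 0 < η) :
    ∃ m₂ > (0:ℝ), ∀ x : EuclideanSpace ℝ (Fin d), 2 < ‖x‖ →
      -m₂ * ‖x‖ ^ (η - β') ≤
        ∫ z in {z : EuclideanSpace ℝ (Fin d) | ‖x + z‖ ≤ 3 * ‖x‖ / 4 ∧ 1 < ‖z‖},
          (‖x + z‖ ^ η - ‖x‖ ^ η) / ‖z‖ ^ ((d : ℝ) + β') := by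
  set r : ℝ := (d : ℝ) + β' with hr_def
  have hdr : (d : ℝ) < r := by simp only [hr_def]; linarith
  set C : ℝ := ∫ z in {z : EuclideanSpace ℝ (Fin d) | 1 ≤ ‖z‖}, ‖z‖ ^ (-r) with hC_def
  have hC0 : 0 ≤ C := by
    apply setIntegral_nonneg (measurableSet_le measurable_const measurable_norm)
    intro z _
    positivity
  have h4pos : (0:ℝ) < 4 ^ β' := Real.rpow_pos_of_pos (by norm_num) _
  refine ⟨C * 4 ^ β' + 1, by positivity, fun x hx => ?_⟩
  have hxpos : (0:ℝ) < ‖x‖ := by linarith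
  set S : Set (EuclideanSpace ℝ (Fin d)) :=
    {z | ‖x + z‖ ≤ 3 * ‖x‖ / 4 ∧ 1 < ‖z‖} with hS_def
  set T : Set (EuclideanSpace ℝ (Fin d)) := {z | ‖x‖ / 4 ≤ ‖z‖} with hT_def
  have hSm : MeasurableSet S := by
    apply MeasurableSet.inter
    · exact measurableSet_le ((measurable_id.const_add x).norm) measurable_const
    · exact measurableSet_lt measurable_const measurable_norm
  have hST : S ⊆ T := by
    intro z hz
    have h1 : ‖x + z‖ ≤ 3 * ‖x‖ / 4 := hz.1
    have h2 : ‖x‖ ≤ ‖x + z‖ + ‖z‖ := by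
      have := norm_add_le (x + z) (-z)
      simpa using this
    simp only [hT_def, Set.mem_setOf_eq]
    linarith
  have hIT : IntegrableOn (fun z : EuclideanSpace ℝ (Fin d) => ‖x‖ ^ η * ‖z‖ ^ (-r)) T :=
    (aux_integrableOn d hdr (by linarith : (0:ℝ) < ‖x‖ / 4)).const_mul _
  have hIS : IntegrableOn (fun z : EuclideanSpace ℝ (Fin d) => ‖x‖ ^ η * ‖z‖ ^ (-r)) S :=
    hIT.mono_set hST
  have hpt : ∀ z ∈ S, 0 ≤ -((‖x + z‖ ^ η - ‖x‖ ^ η) / ‖z‖ ^ r)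
      ∧ -((‖x + z‖ ^ η - ‖x‖ ^ η) / ‖z‖ ^ r) ≤ ‖x‖ ^ η * ‖z‖ ^ (-r) := by
    intro z hz
    obtain ⟨h1, h2⟩ := hz
    have hz0 : (0:ℝ) < ‖z‖ := by linarith
    have hden : (0:ℝ) < ‖z‖ ^ r := Real.rpow_pos_of_pos hz0 _
    have hle : ‖x + z‖ ^ η ≤ ‖x‖ ^ η :=
      Real.rpow_le_rpow (norm_nonneg _) (by linarith) hη.le
    have hnn : (0:ℝ) ≤ ‖x + z‖ ^ η := Real.rpow_nonneg (norm_nonneg _) _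
    constructor
    · have : (‖x + z‖ ^ η - ‖x‖ ^ η) / ‖z‖ ^ r ≤ 0 :=
        div_nonpos_of_nonpos_of_nonneg (by linarith) hden.le
      linarith
    · rw [Real.rpow_neg hz0.le, ← div_eq_mul_inv, ← neg_div, neg_sub]
      gcongr
      linarith
  have step1 : -(∫ z in S, (‖x + z‖ ^ η - ‖x‖ ^ η) / ‖z‖ ^ r)
      ≤ ∫ z in S, ‖x‖ ^ η * ‖z‖ ^ (-r) := by
    rw [← integral_neg]
    apply integral_mono_of_nonneg
    · filter_upwards [ae_restrict_mem hSm] with z hz using (hpt z hz).1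
    · exact hIS
    · filter_upwards [ae_restrict_mem hSm] with z hz using (hpt z hz).2
  have step2 : (∫ z in S, ‖x‖ ^ η * ‖z‖ ^ (-r)) ≤ ∫ z in T, ‖x‖ ^ η * ‖z‖ ^ (-r) := by
    apply setIntegral_mono_set hIT
    · filter_upwards with z
      positivity
    · exact HasSubset.Subset.eventuallyLE hST
  have step3 : (∫ z in T, ‖x‖ ^ η * ‖z‖ ^ (-r)) = ‖x‖ ^ η * ((‖x‖ / 4) ^ ((d:ℝ) - r) * C) := by
    rw [integral_const_mul, aux_scaling d r (by linarith : (0:ℝ) < ‖x‖ / 4)]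
  have hdrr : (d:ℝ) - r = -β' := by simp only [hr_def]; ring
  have e1 : ((‖x‖ / 4 : ℝ)) ^ (-β') = ‖x‖ ^ (-β') * 4 ^ β' := by
    rw [Real.div_rpow hxpos.le (by norm_num : (0:ℝ) ≤ 4), Real.rpow_neg (by norm_num : (0:ℝ) ≤ 4),
      div_eq_mul_inv, inv_inv]
  have e2 : ‖x‖ ^ η * ‖x‖ ^ (-β') = ‖x‖ ^ (η - β') := by
    rw [← Real.rpow_add hxpos]; ring_nf
  have step4 : ‖x‖ ^ η * ((‖x‖ / 4) ^ ((d:ℝ) - r) * C) = (C * 4 ^ β') * ‖x‖ ^ (η - β') := by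
    rw [hdrr, e1, ← e2]; ring
  have hpow : (0:ℝ) ≤ ‖x‖ ^ (η - β') := Real.rpow_nonneg hxpos.le _
  calc -(C * 4 ^ β' + 1) * ‖x‖ ^ (η - β')
      ≤ -(‖x‖ ^ η * ((‖x‖ / 4) ^ ((d:ℝ) - r) * C)) := by
        rw [step4]; nlinarith
    _ ≤ ∫ z in S, (‖x + z‖ ^ η - ‖x‖ ^ η) / ‖z‖ ^ r := by
        rw [← step3]
        linarith [step1, step2]
end

section
/- Fix d ≥ 1 and 1 < α′ < β′ < 2, and let φ : ℝ^d → [0,1] be a C^∞ function with φ = 1 on the closed ball of radius 1/2 about 0 and φ = 0 outside the open unit ball. Define γ(x,z) := φ(2(x+z)/(1+|x|)) · (1 − φ(4x)) · (α′ − β′) and π̃(x,z) := |z|^{−d−β′−γ(x,z)} for z ≠ 0. Then for every η ∈ (α′, β′) there exist constants c₁ > 0 and c₂ > 0 such that for every x ∈ ℝ^d with |x| ≥ 4 the integral ∫_{|z|>1} ( |x+z|^η − |x|^η ) π̃(x,z) dz converges absolutely and ∫_{|z|>1} ( |x+z|^η − |x|^η ) π̃(x,z) dz ≤ c₁ − c₂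 |x|^{η−α′}. -/
open MeasureTheory

/-- The exponent perturbation `γ(x,z) = φ(2(x+z)/(1+|x|)) (1 − φ(4x)) (α′ − β′)`. -/
noncomputable def gammaExp {d : ℕ} (α' β' : ℝ) (φ : EuclideanSpace ℝ (Fin d) → ℝ)
    (x z : EuclideanSpace ℝ (Fin d)) : ℝ :=
  φ ((2 / (1 + ‖x‖)) • (x + z)) * (1 - φ ((4:ℝ) • x)) * (α' - β')

/-- The variable-order kernel `π̃(x,z) = |z|^{−d−β′−γ(x,z)}`. -/
noncomputable def pitilde {d : ℕ} (α' β' : ℝ) (φ : EuclideanSpace ℝ (Fin d) → ℝ)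
    (x z : EuclideanSpace ℝ (Fin d)) : ℝ :=
  ‖z‖ ^ (-(d : ℝ) - β' - gammaExp α' β' φ x z)

lemma aux_measS {d : ℕ} : MeasurableSet {z : EuclideanSpace ℝ (Fin d) | 1 < ‖z‖} :=
  (isOpen_lt continuous_const continuous_norm).measurableSet

lemma aux_bern {η a c : ℝ} (hη : 1 < η) (ha : 0 ≤ a) (hc : 0 ≤ c) :
    a ^ η - c ^ η ≤ η * a ^ (η - 1) * (a - c) := by
  rcases eq_or_lt_of_le ha with rfl | ha
  · rw [Real.zero_rpow (by positivity), Real.zero_rpow (show η - 1 ≠ 0 by intro h; linarith)]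
    have : (0:ℝ) ≤ c ^ η := Real.rpow_nonneg hc η
    nlinarith
  · have hb := one_add_mul_self_le_rpow_one_add (s := c / a - 1) (p := η)
      (by have := div_nonneg hc ha.le; linarith) hη.le
    rw [add_sub_cancel] at hb
    have hdiv : (c / a) ^ η = c ^ η / a ^ η := Real.div_rpow hc ha.le η
    rw [hdiv] at hb
    have haη : (0:ℝ) < a ^ η := Real.rpow_pos_of_pos ha η
    have h2 : a ^ η * (1 + η * (c / a - 1)) ≤ c ^ η := by
      rw [mul_comm, ← le_div_iff₀ haη]; linarith
    have hsub : a ^ η = a ^ (η - 1) * a := by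
      rw [← Real.rpow_add_one (ne_of_gt ha), sub_add_cancel]
    have hca : a ^ η * (c / a) = a ^ (η - 1) * c := by
      rw [hsub]; field_simp
    nlinarith [h2, hca]

lemma aux_abs {η a c : ℝ} (hη : 1 < η) (ha : 0 ≤ a) (hc : 0 ≤ c) :
    |a ^ η - c ^ η| ≤ η * (a + c) ^ (η - 1) * |a - c| := by
  have h1 : (0:ℝ) ≤ η - 1 := by linarith
  have hη0 : (0:ℝ) ≤ η := by linarith
  rcases le_total a c with h | h
  · rw [abs_sub_comm, abs_of_nonneg (by nlinarith [Real.rpow_le_rpow ha h hη0] : (0:ℝ) ≤ c ^ η - a ^ η),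
      abs_sub_comm, abs_of_nonneg (by linarith : (0:ℝ) ≤ c - a)]
    calc c ^ η - a ^ η ≤ η * c ^ (η-1) * (c - a) := aux_bern hη hc ha
      _ ≤ η * (a+c) ^ (η-1) * (c - a) := by
          have h2 : c ^ (η-1) ≤ (a+c) ^ (η-1) := Real.rpow_le_rpow hc (by linarith) h1
          have := mul_le_mul_of_nonneg_right h2 (by linarith : (0:ℝ) ≤ c - a)
          nlinarith
  · rw [abs_of_nonneg (by nlinarith [Real.rpow_le_rpow hc h hη0] : (0:ℝ) ≤ a ^ η - c ^ η),
      abs_of_nonneg (by linarith : (0:ℝ) ≤ a - c)]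
    calc a ^ η - c ^ η ≤ η * a ^ (η-1) * (a - c) := aux_bern hη ha hc
      _ ≤ η * (a+c) ^ (η-1) * (a - c) := by
          have h2 : a ^ (η-1) ≤ (a+c) ^ (η-1) := Real.rpow_le_rpow ha (by linarith) h1
          have := mul_le_mul_of_nonneg_right h2 (by linarith : (0:ℝ) ≤ a - c)
          nlinarith

lemma aux_sub {p a c : ℝ} (hp0 : 0 ≤ p) (hp1 : p ≤ 1) (ha : 0 ≤ a) (hc : 0 ≤ c) :
    |a ^ p - c ^ p| ≤ |a - c| ^ p := by
  have key : ∀ u v : ℝ, 0 ≤ u → 0 ≤ v → (u + v) ^ p ≤ u ^ p + v ^ p := by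
    intro u v hu hv
    have := NNReal.rpow_add_le_add_rpow (u.toNNReal) (v.toNNReal) hp0 hp1
    have h2 := congrArg (fun t : NNReal => (t:ℝ)) (Real.toNNReal_add hu hv).symm
    calc (u+v) ^ p = ((u.toNNReal + v.toNNReal : NNReal) : ℝ) ^ p := by
          rw [← Real.toNNReal_add hu hv, Real.coe_toNNReal _ (by linarith)]
      _ = (((u.toNNReal + v.toNNReal) ^ p : NNReal) : ℝ) := by
          rw [← NNReal.coe_rpow]
      _ ≤ ((u.toNNReal ^ p + v.toNNReal ^ p : NNReal) : ℝ) := by exact_mod_cast this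
      _ = u ^ p + v ^ p := by
          rw [NNReal.coe_add, NNReal.coe_rpow, NNReal.coe_rpow,
            Real.coe_toNNReal _ hu, Real.coe_toNNReal _ hv]
  rcases le_total a c with h | h
  · have h2 := key a (c - a) ha (by linarith)
    rw [add_sub_cancel] at h2
    rw [abs_sub_comm, abs_of_nonneg (by nlinarith [Real.rpow_le_rpow ha h hp0] :
        (0:ℝ) ≤ c ^ p - a ^ p), abs_sub_comm, abs_of_nonneg (by linarith : (0:ℝ) ≤ c - a)]
    linarith
  · have h2 := key c (a - c) hc (by linarith)
    rw [add_sub_cancel] at h2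
    rw [abs_of_nonneg (by nlinarith [Real.rpow_le_rpow hc h hp0] : (0:ℝ) ≤ a ^ p - c ^ p),
      abs_of_nonneg (by linarith : (0:ℝ) ≤ a - c)]
    linarith

lemma aux_secdiff {d : ℕ} {η : ℝ} (hη1 : 1 < η) (hη2 : η < 2) (x z : EuclideanSpace ℝ (Fin d)) :
    ‖x + z‖ ^ η + ‖x - z‖ ^ η - 2 * ‖x‖ ^ η ≤ 18 * ‖z‖ ^ η := by
  have hη0 : (0:ℝ) < η := by linarith
  rcases eq_or_ne z 0 with rfl | hz
  · simp only [add_zero, sub_zero, norm_zero, Real.zero_rpow (ne_of_gt hη0), mul_zero]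
    linarith
  set a := ‖x + z‖ with hadef
  set b := ‖x - z‖ with hbdef
  set c := ‖x‖ with hcdef
  set n := ‖z‖ with hndef
  have ha : 0 ≤ a := norm_nonneg _
  have hb : 0 ≤ b := norm_nonneg _
  have hc : 0 ≤ c := norm_nonneg _
  have hnpos : 0 < n := norm_pos_iff.mpr hz
  have hac : |a - c| ≤ n := by
    have h := abs_norm_sub_norm_le (x + z) x
    have h2 : x + z - x = z := by abel
    rwa [h2] at h
  have hbc : |b - c| ≤ n := by
    have h := abs_norm_sub_norm_le (x - z) x
    have h2 : x - z - x = -z := by abel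
    rwa [h2, norm_neg] at h
  obtain ⟨hac1, hac2⟩ := abs_le.mp hac
  obtain ⟨hbc1, hbc2⟩ := abs_le.mp hbc
  have hnn : (0:ℝ) ≤ n ^ η := Real.rpow_nonneg hnpos.le η
  rcases le_or_gt c (2 * n) with hcase | hcase
  · -- c ≤ 2n : crude bound
    have h1 : a ^ η ≤ (3 * n) ^ η := Real.rpow_le_rpow ha (by linarith) hη0.le
    have h2 : b ^ η ≤ (3 * n) ^ η := Real.rpow_le_rpow hb (by linarith) hη0.le
    have h4 : (3 * n) ^ η = 3 ^ η * n ^ η := Real.mul_rpow (by norm_num) hnpos.le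
    have h5 : (3:ℝ) ^ η ≤ 9 := by
      have h6 : (3:ℝ) ^ η ≤ 3 ^ (2:ℝ) := Real.rpow_le_rpow_of_exponent_le (by norm_num) hη2.le
      have h9 : (3:ℝ) ^ (2:ℝ) = 9 := by
        rw [show (2:ℝ) = ((2:ℕ):ℝ) by norm_num, Real.rpow_natCast]; norm_num
      linarith
    have hcpos : (0:ℝ) ≤ c ^ η := Real.rpow_nonneg hc η
    nlinarith
  · -- 2n < c
    have hnc : n < c := by linarith
    have hcpos : 0 < c := by linarith
    have hapos : 0 < a := by linarith
    have hbpos : 0 < b := by linarith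
    have hpar : a * a + b * b = 2 * (c * c + n * n) := by
      have hp := parallelogram_law_with_norm ℝ x z
      nlinarith [hp]
    set t := n ^ 2 / c with htdef
    have htpos : 0 < t := by positivity
    have hct : c * t = n ^ 2 := by
      rw [htdef, mul_comm, div_mul_cancel₀ _ (ne_of_gt hcpos)]
    have hsum : a + b ≤ 2 * c + t := by
      nlinarith [sq_nonneg (a - b), sq_nonneg (a + b - 2*c - t)]
    have hA := aux_bern hη1 ha hc
    have hB := aux_bern hη1 hb hc
    have h1' : (0:ℝ) ≤ η - 1 := by linarith
    have hp1 : a ^ (η-1) * (a + b - 2*c) ≤ 2 * n ^ η := by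
      have hane : a ^ (η-1) ≤ (2*c) ^ (η-1) :=
        Real.rpow_le_rpow ha (by linarith) h1'
      have h2c : (2*c) ^ (η-1) = 2 ^ (η-1) * c ^ (η-1) := Real.mul_rpow (by norm_num) hc
      have h2le : (2:ℝ) ^ (η-1) ≤ 2 := by
        have h7 : (2:ℝ) ^ (η-1) ≤ 2 ^ (1:ℝ) :=
          Real.rpow_le_rpow_of_exponent_le (by norm_num) (by linarith)
        rwa [Real.rpow_one] at h7
      have hcn : c ^ (η-2) ≤ n ^ (η-2) :=
        Real.rpow_le_rpow_of_nonpos hnpos hnc.le (by linarith)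
      have hsplit : c ^ (η-1) = c ^ (η-2) * c := by
        rw [← Real.rpow_add_one (ne_of_gt hcpos)]; congr 1; ring
      have s5 : n ^ (η-2) * n ^ 2 = n ^ η := by
        rw [← Real.rpow_natCast n 2, ← Real.rpow_add hnpos]; congr 1; push_cast; ring
      have h2p : (0:ℝ) ≤ (2:ℝ) ^ (η-1) := by positivity
      calc a ^ (η-1) * (a + b - 2*c)
          ≤ a ^ (η-1) * t := mul_le_mul_of_nonneg_left (by linarith) (Real.rpow_nonneg ha _)
        _ ≤ (2 ^ (η-1) * c ^ (η-1)) * t := by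
            rw [← h2c]; exact mul_le_mul_of_nonneg_right hane htpos.le
        _ = 2 ^ (η-1) * (c ^ (η-2) * n ^ 2) := by
            rw [hsplit, htdef]; field_simp
        _ ≤ 2 ^ (η-1) * (n ^ (η-2) * n ^ 2) := by
            refine mul_le_mul_of_nonneg_left ?_ h2p
            exact mul_le_mul_of_nonneg_right hcn (sq_nonneg n)
        _ = 2 ^ (η-1) * n ^ η := by rw [s5]
        _ ≤ 2 * n ^ η := mul_le_mul_of_nonneg_right h2le hnn
    have hp2 : (b ^ (η-1) - a ^ (η-1)) * (b - c) ≤ 2 * n ^ η := by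
      have s2 : |b ^ (η-1) - a ^ (η-1)| ≤ |b - a| ^ (η-1) :=
        aux_sub (by linarith) (by linarith) hb ha
      have s3 : |b - a| ≤ 2 * n := abs_le.mpr ⟨by linarith, by linarith⟩
      have s4 : |b - a| ^ (η-1) ≤ (2*n) ^ (η-1) :=
        Real.rpow_le_rpow (abs_nonneg _) s3 h1'
      have s5 : (2*n) ^ (η-1) = 2 ^ (η-1) * n ^ (η-1) := Real.mul_rpow (by norm_num) hnpos.le
      have h2le : (2:ℝ) ^ (η-1) ≤ 2 := by
        have h7 : (2:ℝ) ^ (η-1) ≤ 2 ^ (1:ℝ) :=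
          Real.rpow_le_rpow_of_exponent_le (by norm_num) (by linarith)
        rwa [Real.rpow_one] at h7
      have s6 : n ^ (η-1) * n = n ^ η := by
        rw [← Real.rpow_add_one (ne_of_gt hnpos)]; congr 1; ring
      have hnn1 : (0:ℝ) ≤ n ^ (η-1) := Real.rpow_nonneg hnpos.le _
      calc (b ^ (η-1) - a ^ (η-1)) * (b - c)
          ≤ |b ^ (η-1) - a ^ (η-1)| * |b - c| := by
            refine (le_abs_self _).trans ?_
            rw [abs_mul]
        _ ≤ (2 ^ (η-1) * n ^ (η-1)) * n := by
            rw [← s5]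
            exact mul_le_mul (s2.trans s4) hbc (abs_nonneg _)
              (Real.rpow_nonneg (by positivity) _)
        _ ≤ (2 * n ^ (η-1)) * n := by
            refine mul_le_mul_of_nonneg_right ?_ hnpos.le
            exact mul_le_mul_of_nonneg_right h2le hnn1
        _ = 2 * n ^ η := by rw [mul_assoc, s6]
    have hid : η * a^(η-1)*(a-c) + η * b^(η-1)*(b-c)
        = η * (a^(η-1)*(a + b - 2*c) + (b^(η-1) - a^(η-1))*(b-c)) := by ring
    have hP : a^(η-1)*(a + b - 2*c) + (b^(η-1) - a^(η-1))*(b-c) ≤ 4 * n ^ η := by linarith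
    have hfin : η * (a^(η-1)*(a + b - 2*c) + (b^(η-1) - a^(η-1))*(b-c)) ≤ η * (4 * n ^ η) :=
      mul_le_mul_of_nonneg_left hP hη0.le
    have hfin2 : η * (4 * n ^ η) ≤ 2 * (4 * n ^ η) :=
      mul_le_mul_of_nonneg_right hη2.le (by positivity)
    linarith [hA, hB]

lemma aux_int {d : ℕ} {t : ℝ} (ht : (d:ℝ) < t) :
    IntegrableOn (fun z : EuclideanSpace ℝ (Fin d) => ‖z‖ ^ (-t))
      {z : EuclideanSpace ℝ (Fin d) | 1 < ‖z‖} := by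
  have htpos : 0 < t := lt_of_le_of_lt (Nat.cast_nonneg d) ht
  have hg : Integrable (fun z : EuclideanSpace ℝ (Fin d) => (2:ℝ) ^ t * (1 + ‖z‖) ^ (-t)) := by
    refine (integrable_one_add_norm ?_).const_mul _
    rwa [finrank_euclideanSpace_fin]
  refine Integrable.mono' hg.restrict ?_ ?_
  · refine ContinuousOn.aestronglyMeasurable ?_ aux_measS
    refine ContinuousOn.rpow_const (continuous_norm.continuousOn) ?_
    intro z hz
    exact Or.inl (by simp only [Set.mem_setOf_eq] at hz; positivity)
  · refine (ae_restrict_iff' aux_measS).mpr (ae_of_all _ ?_)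
    intro z hz
    simp only [Set.mem_setOf_eq] at hz
    have hz0 : (0:ℝ) < ‖z‖ := by linarith
    rw [Real.norm_of_nonneg (Real.rpow_nonneg (norm_nonneg _) _)]
    have h1 : ((2:ℝ) * ‖z‖) ^ (-t) ≤ (1 + ‖z‖) ^ (-t) :=
      Real.rpow_le_rpow_of_nonpos (by linarith) (by linarith) (by linarith)
    have h2 : ((2:ℝ) * ‖z‖) ^ (-t) = 2 ^ (-t) * ‖z‖ ^ (-t) :=
      Real.mul_rpow (by norm_num) (norm_nonneg _)
    have h3 : (0:ℝ) < (2:ℝ) ^ t := by positivity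
    have h4 : (2:ℝ) ^ (-t) * 2 ^ t = 1 := by
      rw [← Real.rpow_add (by norm_num)]; simp
    nlinarith [Real.rpow_nonneg (norm_nonneg z) (-t),
      mul_le_mul_of_nonneg_left h1 h3.le, h2]

set_option maxHeartbeats 4000000 in
theorem stmt18 (d : ℕ) (hd : 1 ≤ d) (α' β' η : ℝ)
    (h1 : 1 < α') (h2 : α' < β') (h3 : β' < 2) (hη1 : α' < η) (hη2 : η < β')
    (φ : EuclideanSpace ℝ (Fin d) → ℝ) (hφ : ContDiff ℝ (⊤ : ℕ∞) φ)
    (hφ01 : ∀ x, φ x ∈ Set.Icc (0:ℝ) 1)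
    (hφ1 : ∀ x : EuclideanSpace ℝ (Fin d), ‖x‖ ≤ 1/2 → φ x = 1)
    (hφ0 : ∀ x : EuclideanSpace ℝ (Fin d), 1 ≤ ‖x‖ → φ x = 0) :
    ∃ c₁ > (0:ℝ), ∃ c₂ > (0:ℝ), ∀ x : EuclideanSpace ℝ (Fin d), 4 ≤ ‖x‖ →
      IntegrableOn
        (fun z => (‖x + z‖ ^ η - ‖x‖ ^ η) * pitilde α' β' φ x z)
        {z : EuclideanSpace ℝ (Fin d) | 1 < ‖z‖} ∧
      ∫ z in {z : EuclideanSpace ℝ (Fin d) | 1 < ‖z‖},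
          (‖x + z‖ ^ η - ‖x‖ ^ η) * pitilde α' β' φ x z
        ≤ c₁ - c₂ * ‖x‖ ^ (η - α') := by
  have hη1' : 1 < η := lt_trans h1 hη1
  have hη2' : η < 2 := lt_trans hη2 h3
  have hη0 : (0:ℝ) < η := by linarith
  set S := {z : EuclideanSpace ℝ (Fin d) | 1 < ‖z‖} with hSdef
  have hS : MeasurableSet S := aux_measS
  -- the symmetric-part comparison integral
  have hexp : (fun z : EuclideanSpace ℝ (Fin d) => ‖z‖ ^ (-((d:ℝ) + β' - η)))
      = fun z => ‖z‖ ^ (η - (d:ℝ) - β') := by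
    funext z; congr 1; ring
  have hI0int : IntegrableOn (fun z : EuclideanSpace ℝ (Fin d) => ‖z‖ ^ (η - (d:ℝ) - β')) S := by
    rw [← hexp]; exact aux_int (by linarith)
  set I₀ := ∫ z in S, ‖z‖ ^ (η - (d:ℝ) - β') with hI0def
  have hI0nn : 0 ≤ I₀ :=
    setIntegral_nonneg hS fun z _ => Real.rpow_nonneg (norm_nonneg _) _
  set Vb := (volume (Metric.ball (0 : EuclideanSpace ℝ (Fin d)) 1)).toReal with hVbdef
  have hVb : 0 < Vb := by
    refine ENNReal.toReal_pos (ne_of_gt (Metric.measure_ball_pos _ _ one_pos)) ?_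
    exact (measure_ball_lt_top).ne
  set c₀ := 1 - (3:ℝ) ^ (α' - β') with hc₀def
  have hc₀ : 0 < c₀ := by
    have : (3:ℝ) ^ (α' - β') < 1 :=
      Real.rpow_lt_one_of_one_lt_of_neg (by norm_num) (by linarith)
    simp only [hc₀def]; linarith
  set c₂ := (3/4) * c₀ * ((2:ℝ) ^ (-(d:ℝ) - α')) * ((4:ℝ) ^ (-(d:ℝ))) * Vb with hc₂def
  have hc₂pos : 0 < c₂ := by
    have p1 : (0:ℝ) < (2:ℝ) ^ (-(d:ℝ) - α') := Real.rpow_pos_of_pos (by norm_num) _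
    have p2 : (0:ℝ) < (4:ℝ) ^ (-(d:ℝ)) := Real.rpow_pos_of_pos (by norm_num) _
    positivity
  refine ⟨9 * I₀ + 1, by linarith, c₂, hc₂pos, ?_⟩
  intro x hx
  have hR0 : (0:ℝ) < ‖x‖ := by linarith
  -- gamma facts
  have hγeq : ∀ z, gammaExp α' β' φ x z = φ ((2 / (1 + ‖x‖)) • (x + z)) * (α' - β') := by
    intro z
    have h4x : φ ((4:ℝ) • x) = 0 := by
      refine hφ0 _ ?_
      rw [norm_smul, Real.norm_eq_abs, abs_of_pos (by norm_num : (0:ℝ) < 4)]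
      linarith
    rw [gammaExp, h4x]; ring
  have hargnorm : ∀ z, ‖(2 / (1 + ‖x‖)) • (x + z)‖ = 2 / (1 + ‖x‖) * ‖x + z‖ := by
    intro z
    rw [norm_smul, Real.norm_eq_abs, abs_of_pos (by positivity)]
  have hγ0 : ∀ z, ‖x‖ ≤ ‖x + z‖ → gammaExp α' β' φ x z = 0 := by
    intro z hz
    have harg : 1 ≤ ‖(2 / (1 + ‖x‖)) • (x + z)‖ := by
      rw [hargnorm, div_mul_eq_mul_div, le_div_iff₀ (by positivity : (0:ℝ) < 1 + ‖x‖)]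
      linarith
    rw [hγeq, hφ0 _ harg, zero_mul]
  have hγa : ∀ z, ‖x + z‖ ≤ ‖x‖ / 4 → gammaExp α' β' φ x z = α' - β' := by
    intro z hz
    have harg : ‖(2 / (1 + ‖x‖)) • (x + z)‖ ≤ 1/2 := by
      rw [hargnorm, div_mul_eq_mul_div, div_le_div_iff₀ (by positivity) (by norm_num : (0:ℝ) < 2)]
      nlinarith
    rw [hγeq, hφ1 _ harg, one_mul]
  have hγnonpos : ∀ z, gammaExp α' β' φ x z ≤ 0 := by
    intro z
    obtain ⟨ht0, ht1⟩ := hφ01 ((2 / (1 + ‖x‖)) • (x + z))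
    rw [hγeq]
    nlinarith
  have hγlb : ∀ z, α' - β' ≤ gammaExp α' β' φ x z := by
    intro z
    obtain ⟨ht0, ht1⟩ := hφ01 ((2 / (1 + ‖x‖)) • (x + z))
    rw [hγeq]
    nlinarith
  -- kernel bounds
  set k : EuclideanSpace ℝ (Fin d) → ℝ := fun z => ‖z‖ ^ (-(d:ℝ) - β') with hkdef
  set pt : EuclideanSpace ℝ (Fin d) → ℝ := pitilde α' β' φ x with hptdef
  have hknn : ∀ z, 0 ≤ k z := fun z => Real.rpow_nonneg (norm_nonneg _) _
  have hptk : ∀ z ∈ S, k z ≤ pt z := by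
    intro z hz
    have hz1 : 1 ≤ ‖z‖ := le_of_lt hz
    exact Real.rpow_le_rpow_of_exponent_le hz1 (by linarith [hγnonpos z])
  have hpt1 : ∀ z ∈ S, pt z ≤ 1 := by
    intro z hz
    refine Real.rpow_le_one_of_one_le_of_nonpos (le_of_lt hz) ?_
    have := hγlb z
    have hd0 : (0:ℝ) ≤ (d:ℝ) := Nat.cast_nonneg d
    linarith
  have hpteqk : ∀ z, ‖x‖ ≤ ‖x + z‖ → pt z = k z := by
    intro z hz
    rw [hptdef, hkdef, pitilde, hγ0 z hz, sub_zero]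
  have hptA : ∀ z, ‖x + z‖ ≤ ‖x‖ / 4 → pt z = ‖z‖ ^ (-(d:ℝ) - α') := by
    intro z hz
    rw [hptdef, pitilde, hγa z hz]
    congr 1; ring
  -- functions
  set f : EuclideanSpace ℝ (Fin d) → ℝ := fun z => ‖x + z‖ ^ η - ‖x‖ ^ η with hfdef
  set h : EuclideanSpace ℝ (Fin d) → ℝ := fun z => f z * (pt z - k z) with hhdef
  have hh0 : ∀ z ∈ S, h z ≤ 0 := by
    intro z hz
    rcases le_or_gt ‖x‖ ‖x + z‖ with hle | hlt
    · rw [hhdef]; simp only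
      rw [hpteqk z hle, sub_self, mul_zero]
    · rw [hhdef]; simp only
      refine mul_nonpos_of_nonpos_of_nonneg ?_ (by linarith [hptk z hz])
      have : ‖x + z‖ ^ η ≤ ‖x‖ ^ η := Real.rpow_le_rpow (norm_nonneg _) hlt.le hη0.le
      simp only [hfdef]; linarith
  -- continuity
  have hcont_k : ContinuousOn k S := by
    refine ContinuousOn.rpow_const continuous_norm.continuousOn ?_
    intro z hz
    exact Or.inl (by simp only [hSdef, Set.mem_setOf_eq] at hz; positivity)
  have hcont_pt : ContinuousOn pt S := by
    have hγcont : Continuous (fun z => gammaExp α' β' φ x z) := by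
      simp only [gammaExp]
      have := hφ.continuous
      fun_prop
    have : pt = fun z => ‖z‖ ^ (-(d:ℝ) - β' - gammaExp α' β' φ x z) := rfl
    rw [this]
    refine ContinuousOn.rpow continuous_norm.continuousOn
      ((continuous_const.sub hγcont).continuousOn) ?_
    intro z hz
    exact Or.inl (by simp only [hSdef, Set.mem_setOf_eq] at hz; positivity)
  have hcont_f : ∀ y : EuclideanSpace ℝ (Fin d), Continuous
      (fun z => ‖y + z‖ ^ η - ‖x‖ ^ η) := by
    intro y
    refine Continuous.sub ?_ continuous_const
    refine Continuous.rpow_const ((continuous_const.add continuous_id).norm) ?_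
    intro z; exact Or.inr hη0.le
  -- integrability of the symmetric part
  have key_int : ∀ y : EuclideanSpace ℝ (Fin d), ‖y‖ = ‖x‖ →
      IntegrableOn (fun z => (‖y + z‖ ^ η - ‖x‖ ^ η) * k z) S := by
    intro y hy
    have hg : IntegrableOn (fun z : EuclideanSpace ℝ (Fin d) =>
        (4 * η * ‖x‖ ^ (η - 1)) * ‖z‖ ^ (η - (d:ℝ) - β')) S := hI0int.const_mul _
    refine Integrable.mono' hg ?_ ?_
    · exact (((hcont_f y).continuousOn).mul hcont_k).aestronglyMeasurable hS
    · refine (ae_restrict_iff' hS).mpr (ae_of_all _ ?_)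
      intro z hz
      simp only [hSdef, Set.mem_setOf_eq] at hz
      have hn1 : (1:ℝ) ≤ ‖z‖ := hz.le
      have hn0 : (0:ℝ) < ‖z‖ := by linarith
      set a := ‖y + z‖ with hadef2
      set n := ‖z‖ with hndef2
      have ha0 : 0 ≤ a := norm_nonneg _
      have hdiff : |a - ‖x‖| ≤ n := by
        rw [← hy]
        have hh := abs_norm_sub_norm_le (y + z) y
        have h2 : y + z - y = z := by abel
        rwa [h2] at hh
      have habs : |a ^ η - ‖x‖ ^ η| ≤ η * (a + ‖x‖) ^ (η - 1) * n := by
        refine (aux_abs hη1' ha0 hR0.le).trans ?_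
        rw [mul_assoc, mul_assoc]
        refine mul_le_mul_of_nonneg_left ?_ hη0.le
        exact mul_le_mul_of_nonneg_left hdiff (Real.rpow_nonneg (by positivity) _)
      have haup : a + ‖x‖ ≤ 4 * ‖x‖ * n := by
        obtain ⟨u1, u2⟩ := abs_le.mp hdiff
        have e1 : 2 * ‖x‖ * 1 ≤ 2 * ‖x‖ * n := mul_le_mul_of_nonneg_left hn1 (by linarith)
        have e2 : 1 * n ≤ ‖x‖ * n := mul_le_mul_of_nonneg_right (by linarith) (by linarith)
        have e3 : (0:ℝ) ≤ ‖x‖ * n := by positivity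
        linarith [e1, e2, e3, u2]
      have hpow : (a + ‖x‖) ^ (η - 1) ≤ 4 * ‖x‖ ^ (η - 1) * n ^ (η - 1) := by
        have s1 : (a + ‖x‖) ^ (η - 1) ≤ (4 * ‖x‖ * n) ^ (η - 1) :=
          Real.rpow_le_rpow (by positivity) haup (by linarith)
        have s2 : ((4:ℝ) * ‖x‖ * n) ^ (η - 1)
            = 4 ^ (η - 1) * ‖x‖ ^ (η - 1) * n ^ (η - 1) := by
          rw [Real.mul_rpow (by positivity) hn0.le, Real.mul_rpow (by norm_num) hR0.le]
        have s3 : (4:ℝ) ^ (η - 1) ≤ 4 := by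
          have := Real.rpow_le_rpow_of_exponent_le (by norm_num : (1:ℝ) ≤ 4)
            (by linarith : η - 1 ≤ 1)
          rwa [Real.rpow_one] at this
        have s4 : (0:ℝ) ≤ ‖x‖ ^ (η - 1) * n ^ (η - 1) := by positivity
        have s5 : (4:ℝ) ^ (η-1) * (‖x‖ ^ (η - 1) * n ^ (η - 1)) ≤ 4 * (‖x‖ ^ (η - 1) * n ^ (η - 1)) :=
          mul_le_mul_of_nonneg_right s3 s4
        calc (a + ‖x‖) ^ (η - 1) ≤ (4 * ‖x‖ * n) ^ (η - 1) := s1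
          _ = 4 ^ (η-1) * (‖x‖ ^ (η - 1) * n ^ (η - 1)) := by rw [s2]; ring
          _ ≤ 4 * (‖x‖ ^ (η - 1) * n ^ (η - 1)) := s5
          _ = 4 * ‖x‖ ^ (η - 1) * n ^ (η - 1) := by ring
      -- assemble
      have hkval : k z = n ^ (-(d:ℝ) - β') := rfl
      have hknn' : (0:ℝ) ≤ n ^ (-(d:ℝ) - β') := Real.rpow_nonneg hn0.le _
      have hcollapse : n ^ (η - 1) * n * n ^ (-(d:ℝ) - β') = n ^ (η - (d:ℝ) - β') := by
        rw [← Real.rpow_add_one (ne_of_gt hn0), ← Real.rpow_add hn0]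
        congr 1; ring
      rw [Real.norm_eq_abs, abs_mul, hkval, abs_of_nonneg hknn']
      calc |a ^ η - ‖x‖ ^ η| * n ^ (-(d:ℝ) - β')
          ≤ (η * (4 * ‖x‖ ^ (η - 1) * n ^ (η - 1)) * n) * n ^ (-(d:ℝ) - β') := by
            refine mul_le_mul_of_nonneg_right (habs.trans ?_) hknn'
            exact mul_le_mul_of_nonneg_right
              (mul_le_mul_of_nonneg_left hpow hη0.le) hn0.le
        _ = (4 * η * ‖x‖ ^ (η - 1)) * (n ^ (η - 1) * n * n ^ (-(d:ℝ) - β')) := by ring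
        _ = (4 * η * ‖x‖ ^ (η - 1)) * n ^ (η - (d:ℝ) - β') := by rw [hcollapse]
  -- integrability of h
  have h_int : IntegrableOn h S := by
    have hgind : Integrable ((Metric.closedBall (0 : EuclideanSpace ℝ (Fin d)) (2*‖x‖)).indicator
        (fun _ => ‖x‖ ^ η)) := by
      rw [integrable_indicator_iff measurableSet_closedBall]
      exact integrableOn_const measure_closedBall_lt_top.ne
    refine Integrable.mono' hgind.restrict ?_ ?_
    · refine ContinuousOn.aestronglyMeasurable ?_ hS
      exact ((hcont_f x).continuousOn).mul (hcont_pt.sub hcont_k)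
    · refine (ae_restrict_iff' hS).mpr (ae_of_all _ ?_)
      intro z hz
      rcases le_or_gt ‖x‖ ‖x + z‖ with hle | hlt
      · have : h z = 0 := by
          rw [hhdef]; simp only; rw [hpteqk z hle, sub_self, mul_zero]
        rw [this, norm_zero]
        exact Set.indicator_nonneg (fun _ _ => Real.rpow_nonneg hR0.le η) z
      · have hmem : z ∈ Metric.closedBall (0 : EuclideanSpace ℝ (Fin d)) (2*‖x‖) := by
          rw [Metric.mem_closedBall, dist_zero_right]
          have : ‖z‖ ≤ ‖x + z‖ + ‖x‖ := by
            have e : z = (x + z) - x := by abel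
            calc ‖z‖ = ‖(x + z) - x‖ := by rw [← e]
              _ ≤ ‖x + z‖ + ‖x‖ := norm_sub_le _ _
          linarith
        rw [Set.indicator_of_mem hmem]
        have hfab : |f z| ≤ ‖x‖ ^ η := by
          rw [hfdef]; simp only
          rw [abs_sub_comm, abs_of_nonneg (by
            have := Real.rpow_le_rpow (norm_nonneg _) hlt.le hη0.le
            linarith)]
          have := Real.rpow_nonneg (norm_nonneg (x+z)) η
          linarith [Real.rpow_le_rpow (norm_nonneg (x+z)) hlt.le hη0.le]
        have hptk01 : 0 ≤ pt z - k z ∧ pt z - k z ≤ 1 := by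
          constructor
          · linarith [hptk z hz]
          · linarith [hpt1 z hz, hknn z]
        rw [Real.norm_eq_abs, hhdef]; simp only
        rw [abs_mul, abs_of_nonneg hptk01.1]
        calc |f z| * (pt z - k z) ≤ ‖x‖ ^ η * 1 := by
              exact mul_le_mul hfab hptk01.2 hptk01.1 (Real.rpow_nonneg hR0.le η)
          _ = ‖x‖ ^ η := mul_one _
  -- decomposition of the integrand
  have hFdecomp : (fun z => (‖x + z‖ ^ η - ‖x‖ ^ η) * pitilde α' β' φ x z)
      = fun z => f z * k z + h z := by
    funext z
    rw [hhdef, hfdef]; simp only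
    have : pitilde α' β' φ x z = pt z := rfl
    rw [this]; ring
  have hfk_int : IntegrableOn (fun z => f z * k z) S := key_int x rfl
  have hmain_int : IntegrableOn
      (fun z => (‖x + z‖ ^ η - ‖x‖ ^ η) * pitilde α' β' φ x z) S := by
    rw [hFdecomp]; exact hfk_int.add h_int
  refine ⟨hmain_int, ?_⟩
  -- region A estimate
  set A := Metric.closedBall (-x) (‖x‖/4) with hAdef
  have hAmeas : MeasurableSet A := measurableSet_closedBall
  have hAxz : ∀ z ∈ A, ‖x + z‖ ≤ ‖x‖/4 := by
    intro z hz
    rw [hAdef, Metric.mem_closedBall, dist_eq_norm] at hz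
    have e : z - -x = x + z := by abel
    rwa [e] at hz
  have hAnlb : ∀ z ∈ A, 3 ≤ ‖z‖ := by
    intro z hz
    have h4 := hAxz z hz
    have : ‖x‖ ≤ ‖x + z‖ + ‖z‖ := by
      have e : x = (x + z) - z := by abel
      calc ‖x‖ = ‖(x + z) - z‖ := by rw [← e]
        _ ≤ ‖x + z‖ + ‖z‖ := norm_sub_le _ _
    linarith
  have hAnub : ∀ z ∈ A, ‖z‖ ≤ 2 * ‖x‖ := by
    intro z hz
    have h4 := hAxz z hz
    have : ‖z‖ ≤ ‖x + z‖ + ‖x‖ := by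
      have e : z = (x + z) - x := by abel
      calc ‖z‖ = ‖(x + z) - x‖ := by rw [← e]
        _ ≤ ‖x + z‖ + ‖x‖ := norm_sub_le _ _
    linarith
  have hAsubS : A ⊆ S := by
    intro z hz
    have := hAnlb z hz
    simp only [hSdef, Set.mem_setOf_eq]; linarith
  have hAh : ∀ z ∈ A, h z ≤ -((3/4) * ‖x‖ ^ η * (c₀ * (2*‖x‖) ^ (-(d:ℝ) - α'))) := by
    intro z hz
    have hn3 : (3:ℝ) ≤ ‖z‖ := hAnlb z hz
    have hn0 : (0:ℝ) < ‖z‖ := by linarith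
    have hzS := hAsubS hz
    -- f bound
    have hfz : f z ≤ -((3/4) * ‖x‖ ^ η) := by
      have e1 : ‖x + z‖ ^ η ≤ (‖x‖/4) ^ η :=
        Real.rpow_le_rpow (norm_nonneg _) (hAxz z hz) hη0.le
      have e2 : (‖x‖/4) ^ η = ‖x‖ ^ η / 4 ^ η := Real.div_rpow hR0.le (by norm_num) η
      have e3 : (4:ℝ) ≤ 4 ^ η := by
        have := Real.rpow_le_rpow_of_exponent_le (by norm_num : (1:ℝ) ≤ 4) hη1'.le
        rwa [Real.rpow_one] at this
      have e4 : ‖x‖ ^ η / 4 ^ η ≤ ‖x‖ ^ η / 4 := by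
        refine div_le_div_of_nonneg_left (Real.rpow_nonneg hR0.le η) (by norm_num) e3
      rw [hfdef]; simp only
      have := Real.rpow_nonneg hR0.le η
      linarith [e1, e2.le, e4]
    -- kernel gap bound
    have hgap : c₀ * (2*‖x‖) ^ (-(d:ℝ) - α') ≤ pt z - k z := by
      have hptz : pt z = ‖z‖ ^ (-(d:ℝ) - α') := hptA z (hAxz z hz)
      have hkz : k z = ‖z‖ ^ (-(d:ℝ) - α') * ‖z‖ ^ (α' - β') := by
        rw [hkdef]; simp only
        rw [← Real.rpow_add hn0]
        congr 1; ring
      have hsmall : ‖z‖ ^ (α' - β') ≤ 3 ^ (α' - β') :=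
        Real.rpow_le_rpow_of_nonpos (by norm_num) hn3 (by linarith)
      have hlb : (2*‖x‖) ^ (-(d:ℝ) - α') ≤ ‖z‖ ^ (-(d:ℝ) - α') := by
        refine Real.rpow_le_rpow_of_nonpos hn0 (hAnub z hz) ?_
        have : (0:ℝ) ≤ (d:ℝ) := Nat.cast_nonneg d
        linarith
      have hgap1 : pt z - k z = ‖z‖ ^ (-(d:ℝ) - α') * (1 - ‖z‖ ^ (α' - β')) := by
        rw [hptz, hkz]; ring
      rw [hgap1]
      have hnn : (0:ℝ) ≤ ‖z‖ ^ (-(d:ℝ) - α') := Real.rpow_nonneg hn0.le _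
      calc c₀ * (2*‖x‖) ^ (-(d:ℝ) - α') = (2*‖x‖) ^ (-(d:ℝ) - α') * c₀ := by ring
        _ ≤ ‖z‖ ^ (-(d:ℝ) - α') * c₀ := mul_le_mul_of_nonneg_right hlb hc₀.le
        _ ≤ ‖z‖ ^ (-(d:ℝ) - α') * (1 - ‖z‖ ^ (α' - β')) := by
            refine mul_le_mul_of_nonneg_left ?_ hnn
            rw [hc₀def]; linarith
    -- combine
    have hgap0 : 0 ≤ pt z - k z := by linarith [hptk z hzS]
    have step1 : h z ≤ (-((3/4) * ‖x‖ ^ η)) * (pt z - k z) := by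
      rw [hhdef]; simp only
      exact mul_le_mul_of_nonneg_right hfz hgap0
    have step2 : (-((3/4) * ‖x‖ ^ η)) * (pt z - k z)
        ≤ (-((3/4) * ‖x‖ ^ η)) * (c₀ * (2*‖x‖) ^ (-(d:ℝ) - α')) := by
      refine mul_le_mul_of_nonpos_left hgap ?_
      have := Real.rpow_nonneg hR0.le η
      linarith
    calc h z ≤ _ := step1
      _ ≤ _ := step2
      _ = -((3/4) * ‖x‖ ^ η * (c₀ * (2*‖x‖) ^ (-(d:ℝ) - α'))) := by ring
  -- integral over S of h
  have hintA : IntegrableOn h A := h_int.mono_set hAsubS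
  have hSh_le_Ah : ∫ z in S, h z ≤ ∫ z in A, h z := by
    have hun : S = A ∪ (S \ A) := (Set.union_diff_cancel hAsubS).symm
    have hdisj : Disjoint A (S \ A) := Set.disjoint_sdiff_right
    have hmeas2 : MeasurableSet (S \ A) := hS.diff hAmeas
    have hint2 : IntegrableOn h (S \ A) := h_int.mono_set Set.diff_subset
    have heq : ∫ z in S, h z = (∫ z in A, h z) + ∫ z in S \ A, h z := by
      conv_lhs => rw [hun]
      exact setIntegral_union hdisj hmeas2 hintA hint2
    have hle0 : ∫ z in S \ A, h z ≤ 0 :=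
      setIntegral_nonpos hmeas2 (fun z hz => hh0 z (hz.1))
    linarith
  have hvolA : (volume A).toReal = (‖x‖/4)^d * Vb := by
    rw [hAdef, Measure.addHaar_closedBall volume (-x) (by positivity : (0:ℝ) ≤ ‖x‖/4)]
    rw [ENNReal.toReal_mul, ENNReal.toReal_ofReal (by positivity)]
    rw [finrank_euclideanSpace_fin]
  have hAh_int : ∫ z in A, h z ≤ -((3/4) * ‖x‖ ^ η * (c₀ * (2*‖x‖) ^ (-(d:ℝ) - α'))) * ((‖x‖/4)^d * Vb) := by
    have := setIntegral_mono_on hintA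
      (integrableOn_const measure_closedBall_lt_top.ne) hAmeas hAh
    rw [setIntegral_const] at this
    rw [smul_eq_mul, measureReal_def, hvolA] at this
    linarith [this]
  -- symmetrization bound
  have hfk_int' : IntegrableOn (fun z => (‖-x + z‖ ^ η - ‖x‖ ^ η) * k z) S :=
    key_int (-x) (norm_neg x)
  have hneg : ∫ z in S, f z * k z = ∫ z in S, (‖-x + z‖ ^ η - ‖x‖ ^ η) * k z := by
    have hSneg : ∀ z : EuclideanSpace ℝ (Fin d), -z ∈ S ↔ z ∈ S := by
      intro z; simp only [hSdef, Set.mem_setOf_eq, norm_neg]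
    have hone : ∫ z in S, f z * k z = ∫ z, S.indicator (fun z => f z * k z) z :=
      (integral_indicator hS).symm
    have htwo : ∫ z, S.indicator (fun z => f z * k z) z
        = ∫ z, S.indicator (fun z => f z * k z) (-z) :=
      (integral_neg_eq_self (S.indicator (fun z => f z * k z)) volume).symm
    have hthree : (fun z => S.indicator (fun z => f z * k z) (-z))
        = S.indicator (fun z => (‖-x + z‖ ^ η - ‖x‖ ^ η) * k z) := by
      funext z
      by_cases hz : z ∈ S
      · rw [Set.indicator_of_mem ((hSneg z).mpr hz), Set.indicator_of_mem hz]
        have e1 : ‖x + -z‖ = ‖-x + z‖ := by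
          rw [← norm_neg (x + -z)]; congr 1; abel
        have e2 : k (-z) = k z := by
          rw [hkdef]; simp only [norm_neg]
        rw [hfdef]; simp only
        rw [e1, e2]
      · rw [Set.indicator_of_notMem (fun hc => hz ((hSneg z).mp hc)),
          Set.indicator_of_notMem hz]
    rw [hone, htwo, hthree, integral_indicator hS]
  have hsymm : ∫ z in S, f z * k z ≤ 9 * I₀ := by
    have hsum : (2:ℝ) * ∫ z in S, f z * k z
        = ∫ z in S, (f z * k z + (‖-x + z‖ ^ η - ‖x‖ ^ η) * k z) := by
      rw [integral_add hfk_int hfk_int', ← hneg]; ring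
    have hptw : ∀ z ∈ S, f z * k z + (‖-x + z‖ ^ η - ‖x‖ ^ η) * k z
        ≤ 18 * ‖z‖ ^ (η - (d:ℝ) - β') := by
      intro z hz
      have hz1 : 1 < ‖z‖ := by simpa only [hSdef, Set.mem_setOf_eq] using hz
      have hn0 : (0:ℝ) < ‖z‖ := lt_trans one_pos hz1
      have e2 : ‖-x + z‖ = ‖x - z‖ := by rw [← norm_neg (x - z)]; congr 1; abel
      have hkey := aux_secdiff hη1' hη2' x z
      have hcomb : f z * k z + (‖-x + z‖ ^ η - ‖x‖ ^ η) * k z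
          = (‖x + z‖ ^ η + ‖x - z‖ ^ η - 2 * ‖x‖ ^ η) * k z := by
        rw [hfdef, e2]; ring
      rw [hcomb]
      have hfin : (‖x + z‖ ^ η + ‖x - z‖ ^ η - 2 * ‖x‖ ^ η) * k z ≤ (18 * ‖z‖ ^ η) * k z :=
        mul_le_mul_of_nonneg_right hkey (hknn z)
      have hcol : ‖z‖ ^ η * ‖z‖ ^ (-(d:ℝ) - β') = ‖z‖ ^ (η - (d:ℝ) - β') := by
        rw [← Real.rpow_add hn0]; congr 1; ring
      calc (‖x + z‖ ^ η + ‖x - z‖ ^ η - 2 * ‖x‖ ^ η) * k z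
          ≤ (18 * ‖z‖ ^ η) * k z := hfin
        _ = 18 * (‖z‖ ^ η * ‖z‖ ^ (-(d:ℝ) - β')) := by simp only [hkdef]; ring
        _ = 18 * ‖z‖ ^ (η - (d:ℝ) - β') := by rw [hcol]
    have hmono := setIntegral_mono_on (hfk_int.add hfk_int')
      ((hI0int.const_mul 18)) hS hptw
    rw [integral_const_mul] at hmono
    simp only [Pi.add_apply] at hmono
    linarith [hsum, hmono]
  -- final assembly
  have hfinal_eq : ∫ z in S, (‖x + z‖ ^ η - ‖x‖ ^ η) * pitilde α' β' φ x z
      = (∫ z in S, f z * k z) + ∫ z in S, h z := by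
    rw [hFdecomp]
    exact integral_add hfk_int h_int
  have hpow_collapse : -((3/4) * ‖x‖ ^ η * (c₀ * (2*‖x‖) ^ (-(d:ℝ) - α'))) * ((‖x‖/4)^d * Vb)
      = -(c₂ * ‖x‖ ^ (η - α')) := by
    have e1 : ((2:ℝ)*‖x‖) ^ (-(d:ℝ) - α') = 2 ^ (-(d:ℝ) - α') * ‖x‖ ^ (-(d:ℝ) - α') :=
      Real.mul_rpow (by norm_num) hR0.le
    have e2 : ((‖x‖/4 : ℝ))^d = ‖x‖ ^ ((d:ℝ)) * 4 ^ (-(d:ℝ)) := by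
      rw [div_pow, ← Real.rpow_natCast ‖x‖ d, ← Real.rpow_natCast (4:ℝ) d,
        Real.rpow_neg (by norm_num : (0:ℝ) ≤ 4), div_eq_mul_inv]
    have e3 : ‖x‖ ^ η * ‖x‖ ^ (-(d:ℝ) - α') * ‖x‖ ^ ((d:ℝ)) = ‖x‖ ^ (η - α') := by
      rw [← Real.rpow_add hR0, ← Real.rpow_add hR0]; congr 1; ring
    rw [hc₂def, e1, e2]
    linear_combination (-(3/4) * c₀ * (2:ℝ) ^ (-(d:ℝ) - α') * (4:ℝ) ^ (-(d:ℝ)) * Vb) * e3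
  rw [hfinal_eq]
  linarith [hsymm, hSh_le_Ah, hAh_int, hpow_collapse]
end

section
/- Fix d ≥ 1 and 1 < α′ < β′ < α < 2, and let φ : ℝ^d → [0,1] be a C^∞ function with φ = 1 on the closed ball of radius 1/2 about 0 and φ = 0 outside the open unit ball. Define γ(x,z) := φ(2(x+z)/(1+|x|)) · (1 − φ(4x)) · (α′ − β′) and π(x,z) := |z|^{−d−α} + |z|^{−d−β′−γ(x,z)} for z ≠ 0. Then there exists a constant c₂ > 0 such that π(x, z−x) ≤ c₂ · π(y, z−y) for all x, y, z ∈ ℝ^d with min(|z−x|, |z−y|) ≥ 1 and |x−y| ≤ 1. -/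
open MeasureTheory

/-- The variable-order kernel `π(x,z) = |z|^{−d−α} + |z|^{−d−β′−γ(x,z)}`. -/
noncomputable def piKer {d : ℕ} (α α' β' : ℝ) (φ : EuclideanSpace ℝ (Fin d) → ℝ)
    (x z : EuclideanSpace ℝ (Fin d)) : ℝ :=
  ‖z‖ ^ (-(d : ℝ) - α) + ‖z‖ ^ (-(d : ℝ) - β' - gammaExp α' β' φ x z)

set_option maxHeartbeats 4000000 in
theorem stmt19 (d : ℕ) (hd : 1 ≤ d) (α α' β' : ℝ)
    (h1 : 1 < α') (h2 : α' < β') (h3 : β' < α) (h4 : α < 2)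
    (φ : EuclideanSpace ℝ (Fin d) → ℝ) (hφ : ContDiff ℝ (⊤ : ℕ∞) φ)
    (hφ01 : ∀ x, φ x ∈ Set.Icc (0:ℝ) 1)
    (hφ1 : ∀ x : EuclideanSpace ℝ (Fin d), ‖x‖ ≤ 1/2 → φ x = 1)
    (hφ0 : ∀ x : EuclideanSpace ℝ (Fin d), 1 ≤ ‖x‖ → φ x = 0) :
    ∃ c₂ > (0:ℝ), ∀ x y z : EuclideanSpace ℝ (Fin d),
      1 ≤ min ‖z - x‖ ‖z - y‖ → ‖x - y‖ ≤ 1 →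
      piKer α α' β' φ x (z - x) ≤ c₂ * piKer α α' β' φ y (z - y) := by
  -- φ is globally Lipschitz
  obtain ⟨L, hL⟩ : ∃ C : NNReal, LipschitzWith C φ := by
    apply ContDiff.lipschitzWith_of_hasCompactSupport _ hφ (by simp)
    apply HasCompactSupport.intro (isCompact_closedBall (0:EuclideanSpace ℝ (Fin d)) 1)
    intro x hx
    simp only [Metric.mem_closedBall, dist_zero_right, not_le] at hx
    exact hφ0 x hx.le
  -- basic bounds on gammaExp
  have hgamma : ∀ x z : EuclideanSpace ℝ (Fin d),
      α' - β' ≤ gammaExp α' β' φ x z ∧ gammaExp α' β' φ x z ≤ 0 := by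
    intro x z
    have hA := hφ01 ((2 / (1 + ‖x‖)) • (x + z))
    have hB := hφ01 ((4:ℝ) • x)
    have hab : α' - β' < 0 := by linarith
    constructor
    · have : φ ((2 / (1 + ‖x‖)) • (x + z)) * (1 - φ ((4:ℝ) • x)) ≤ 1 := by
        nlinarith [hA.1, hA.2, hB.1, hB.2]
      unfold gammaExp; nlinarith
    · unfold gammaExp
      have : 0 ≤ φ ((2 / (1 + ‖x‖)) • (x + z)) * (1 - φ ((4:ℝ) • x)) := by
        nlinarith [hA.1, hA.2, hB.1, hB.2]
      nlinarith
  set K : ℝ := max 8 (Real.exp (2 * L)) with hKdef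
  have hK8 : (8:ℝ) ≤ K := le_max_left _ _
  have hKe : Real.exp (2 * L) ≤ K := le_max_right _ _
  have hK1 : (1:ℝ) ≤ K := by linarith
  set C : ℝ := (2:ℝ) ^ ((d:ℝ) + 2) with hCdef
  have hC1 : (1:ℝ) ≤ C := Real.one_le_rpow one_le_two (by positivity)
  have hC0 : 0 < C := by linarith
  refine ⟨C * (K + 1), by positivity, ?_⟩
  intro x y z hmin hxy
  have hr : (1:ℝ) ≤ ‖z - x‖ := le_trans hmin (min_le_left _ _)
  have hs : (1:ℝ) ≤ ‖z - y‖ := le_trans hmin (min_le_right _ _)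
  set r : ℝ := ‖z - x‖ with hrdef
  set s : ℝ := ‖z - y‖ with hsdef
  have hr0 : (0:ℝ) < r := by linarith
  have hs0 : (0:ℝ) < s := by linarith
  have hsr : s ≤ 2 * r := by
    have : s ≤ r + ‖x - y‖ := by
      have := norm_add_le (z - x) (x - y)
      simpa [sub_add_sub_cancel] using this
    linarith
  -- gamma abbreviations; note x + (z - x) = z
  have hxz : x + (z - x) = z := by abel
  have hyz : y + (z - y) = z := by abel
  set gx : ℝ := gammaExp α' β' φ x (z - x) with hgx
  set gy : ℝ := gammaExp α' β' φ y (z - y) with hgy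
  obtain ⟨hgx1, hgx2⟩ := hgamma x (z - x)
  obtain ⟨hgy1, hgy2⟩ := hgamma y (z - y)
  rw [← hgx] at hgx1 hgx2
  rw [← hgy] at hgy1 hgy2
  -- base comparison : r ^ e ≤ C * s ^ e for negative exponents e ≥ -(d+2)
  have base : ∀ e : ℝ, e ≤ 0 → -((d:ℝ) + 2) ≤ e → r ^ e ≤ C * s ^ e := by
    intro e he1 he2
    have h1 : r ^ e ≤ (s / 2) ^ e := by
      apply Real.rpow_le_rpow_of_nonpos (by linarith) _ he1
      linarith
    have h2 : (s / 2) ^ e = s ^ e * (2:ℝ) ^ (-e) := by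
      rw [Real.div_rpow hs0.le (by norm_num), Real.rpow_neg (by norm_num)]
      ring
    have h3 : (2:ℝ) ^ (-e) ≤ C := by
      apply Real.rpow_le_rpow_of_exponent_le one_le_two
      linarith
    calc r ^ e ≤ s ^ e * (2:ℝ) ^ (-e) := by rw [← h2]; exact h1
      _ ≤ C * s ^ e := by
          have hse : 0 ≤ s ^ e := Real.rpow_nonneg hs0.le e
          nlinarith
  -- key bound : r ^ (gy - gx) ≤ K
  have key : r ^ (gy - gx) ≤ K := by
    rcases le_or_gt (gy - gx) 0 with hneg | hpos
    · exact le_trans (Real.rpow_le_one_of_one_le_of_nonpos hr hneg) hK1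
    · -- gx < gy ≤ 0 so gx < 0, hence φ((2/(1+‖x‖)) • z) > 0
      have hgxneg : gx < 0 := by linarith
      have hAx : φ ((2 / (1 + ‖x‖)) • z) ≠ 0 := by
        intro h0
        rw [hgx] at hgxneg
        unfold gammaExp at hgxneg
        rw [hxz, h0] at hgxneg
        simp at hgxneg
      have hxn0 : (0:ℝ) < 1 + ‖x‖ := by positivity
      have hznorm : 2 * ‖z‖ < 1 + ‖x‖ := by
        by_contra hcon
        push_neg at hcon
        apply hAx
        apply hφ0
        rw [norm_smul]
        have : |2 / (1 + ‖x‖)| = 2 / (1 + ‖x‖) := abs_of_pos (by positivity)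
        rw [Real.norm_eq_abs, this, div_mul_eq_mul_div, le_div_iff₀ hxn0]
        linarith
      have hrz : r ≤ ‖z‖ + ‖x‖ := by
        have := norm_sub_le z x; linarith [this]
      rcases le_or_gt ‖x‖ 5 with hx5 | hx5
      · -- bounded region : r ≤ 8, exponent ≤ 1
        have hr8 : r ≤ 8 := by linarith
        have hd1 : gy - gx ≤ 1 := by linarith
        calc r ^ (gy - gx) ≤ r ^ (1:ℝ) := Real.rpow_le_rpow_of_exponent_le hr hd1
          _ = r := Real.rpow_one r
          _ ≤ K := by linarith
      · -- far region : both cutoff factors are 1, use Lipschitz bound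
        have hyx : |‖y‖ - ‖x‖| ≤ 1 := by
          have := abs_norm_sub_norm_le y x
          rw [norm_sub_rev] at hxy
          linarith
        have hy4 : (4:ℝ) ≤ ‖y‖ := by
          rcases abs_le.mp hyx with ⟨hl, _⟩; linarith
        have hyn0 : (0:ℝ) < 1 + ‖y‖ := by positivity
        have hBx : φ ((4:ℝ) • x) = 0 := by
          apply hφ0
          rw [norm_smul, Real.norm_eq_abs, abs_of_pos (by norm_num : (0:ℝ) < 4)]
          nlinarith [norm_nonneg x]
        have hBy : φ ((4:ℝ) • y) = 0 := by
          apply hφ0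
          rw [norm_smul, Real.norm_eq_abs, abs_of_pos (by norm_num : (0:ℝ) < 4)]
          nlinarith [norm_nonneg y]
        -- so gx = A_x (α'-β'), gy = A_y (α'-β')
        have hgxe : gx = φ ((2 / (1 + ‖x‖)) • z) * (α' - β') := by
          rw [hgx]; unfold gammaExp; rw [hxz, hBx]; ring
        have hgye : gy = φ ((2 / (1 + ‖y‖)) • z) * (α' - β') := by
          rw [hgy]; unfold gammaExp; rw [hyz, hBy]; ring
        -- Lipschitz estimate
        have hdist : ‖(2 / (1 + ‖x‖)) • z - (2 / (1 + ‖y‖)) • z‖ ≤ 1 / (1 + ‖y‖) := by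
          have : (2 / (1 + ‖x‖)) • z - (2 / (1 + ‖y‖)) • z
              = (2 / (1 + ‖x‖) - 2 / (1 + ‖y‖)) • z := by
            rw [sub_smul]
          rw [this, norm_smul, Real.norm_eq_abs]
          have habs : |2 / (1 + ‖x‖) - 2 / (1 + ‖y‖)| = 2 * |‖y‖ - ‖x‖| / ((1 + ‖x‖) * (1 + ‖y‖)) := by
            rw [div_sub_div _ _ (ne_of_gt hxn0) (ne_of_gt hyn0)]
            rw [abs_div]
            congr 1
            · rw [show 2 * (1 + ‖y‖) - (1 + ‖x‖) * 2 = 2 * (‖y‖ - ‖x‖) by ring, abs_mul]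
              norm_num
            · exact abs_of_pos (by positivity)
          rw [habs]
          rw [div_mul_eq_mul_div, div_le_div_iff₀ (by positivity) hyn0]
          have h1 : |‖y‖ - ‖x‖| * ‖z‖ ≤ ‖z‖ := by
            nlinarith [norm_nonneg z, abs_nonneg (‖y‖ - ‖x‖)]
          nlinarith [norm_nonneg z]
        have hφdiff : |φ ((2 / (1 + ‖x‖)) • z) - φ ((2 / (1 + ‖y‖)) • z)| ≤ (L:ℝ) / (1 + ‖y‖) := by
          have := hL.dist_le_mul ((2 / (1 + ‖x‖)) • z) ((2 / (1 + ‖y‖)) • z)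
          rw [Real.dist_eq, dist_eq_norm] at this
          calc |φ ((2 / (1 + ‖x‖)) • z) - φ ((2 / (1 + ‖y‖)) • z)|
              ≤ (L:ℝ) * ‖(2 / (1 + ‖x‖)) • z - (2 / (1 + ‖y‖)) • z‖ := this
            _ ≤ (L:ℝ) * (1 / (1 + ‖y‖)) := by
                apply mul_le_mul_of_nonneg_left hdist L.coe_nonneg
            _ = (L:ℝ) / (1 + ‖y‖) := by ring
        -- Δ ≤ 2L / r
        have hba : 0 < β' - α' := by linarith
        have hba1 : β' - α' ≤ 1 := by linarith
        have hdelta : gy - gx ≤ (L:ℝ) / (1 + ‖y‖) := by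
          rw [hgxe, hgye]
          have h := (abs_le.mp hφdiff).2
          have h' := (abs_le.mp hφdiff).1
          nlinarith [ L.coe_nonneg, hyn0 ]
        have hr2x : r ≤ 2 * (1 + ‖y‖) := by
          have : 1 + ‖x‖ ≤ 2 + ‖y‖ := by
            rcases abs_le.mp hyx with ⟨hl, _⟩; linarith
          nlinarith
        have hdelta2 : gy - gx ≤ 2 * (L:ℝ) / r := by
          have h1 : (L:ℝ) / (1 + ‖y‖) ≤ 2 * (L:ℝ) / r := by
            rw [div_le_div_iff₀ hyn0 hr0]
            nlinarith [L.coe_nonneg]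
          linarith
        have hexp : r ^ (gy - gx) ≤ Real.exp (2 * L) := by
          calc r ^ (gy - gx) ≤ r ^ (2 * (L:ℝ) / r) :=
                Real.rpow_le_rpow_of_exponent_le hr hdelta2
            _ = Real.exp (Real.log r * (2 * (L:ℝ) / r)) := Real.rpow_def_of_pos hr0 _
            _ ≤ Real.exp (2 * L) := by
                apply Real.exp_le_exp.mpr
                have hlog : Real.log r ≤ r := by
                  have := Real.log_le_sub_one_of_pos hr0; linarith
                have hlog0 : 0 ≤ Real.log r := Real.log_nonneg hr
                rw [mul_div_assoc']
                rw [div_le_iff₀ hr0]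
                nlinarith [L.coe_nonneg]
        exact hexp.trans hKe
  -- now assemble
  unfold piKer
  rw [← hgx, ← hgy, ← hrdef, ← hsdef]
  have t1 : r ^ (-(d:ℝ) - α) ≤ C * s ^ (-(d:ℝ) - α) := by
    apply base <;> [linarith; linarith]
  have t2 : r ^ (-(d:ℝ) - β' - gx) ≤ K * (C * s ^ (-(d:ℝ) - β' - gy)) := by
    have e1 : -(d:ℝ) - β' - gx = (gy - gx) + (-(d:ℝ) - β' - gy) := by ring
    rw [e1, Real.rpow_add hr0]
    have b2 : r ^ (-(d:ℝ) - β' - gy) ≤ C * s ^ (-(d:ℝ) - β' - gy) := by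
      apply base <;> [linarith; linarith]
    have hrpos : 0 ≤ r ^ (-(d:ℝ) - β' - gy) := Real.rpow_nonneg hr0.le _
    have hK0 : 0 < K := by linarith
    calc r ^ (gy - gx) * r ^ (-(d:ℝ) - β' - gy)
        ≤ K * r ^ (-(d:ℝ) - β' - gy) := mul_le_mul_of_nonneg_right key hrpos
      _ ≤ K * (C * s ^ (-(d:ℝ) - β' - gy)) := mul_le_mul_of_nonneg_left b2 hK0.le
  have hs1 : 0 ≤ s ^ (-(d:ℝ) - α) := Real.rpow_nonneg hs0.le _
  have hs2 : 0 ≤ s ^ (-(d:ℝ) - β' - gy) := Real.rpow_nonneg hs0.le _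
  nlinarith [t1, t2,
    mul_nonneg (mul_nonneg hC0.le hs1) (by linarith : (0:ℝ) ≤ K),
    mul_nonneg hC0.le hs2]
end
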